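/- arXiv:2209.07579 — 6 statements merged into one kernel-verified Lean document; each statement's English description precedes it below -/
import Mathlib

section
/- Let 𝒢 and ℋ be DAGs on node set [p] such that c_ℋ = c_𝒢 + e_{S*} for some set S* ⊆ [p] with |S*| ≥ 2 (an addition). Then exactly one of the following holds: (i) S* = {i,j} for some i,j ∈ [p], every v-structure of ℋ is a v-structure of 𝒢 with the possible exception of v-structures of the form i → k ← j, and the skeletons of 𝒢 and ℋ differ exactly by the presence of the edge {i,j} (present in ℋ, absent in 𝒢); or (ii) S* = {i,j,k} for some i,j,k ∈ [p], 𝒢 and ℋ have the same skeleton, and their v-structures differ by exactly the single v-structure i → k ← j (present in ℋ, absent in 𝒢). In particular no addition has |S*| ≥ 4. -/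
open Classical

/-- A DAG on vertex type `V`: a directed graph (adjacency relation) with no directed cycles. -/
structure DAG (V : Type) where
  adj : V → V → Prop
  acyclic : ∀ v, ¬ Relation.TransGen adj v v

namespace DAG

variable {V : Type}

/-- The skeleton of a DAG: the undirected graph obtained by forgetting directions. -/
def skeleton (D : DAG V) : SimpleGraph V where
  Adj i j := D.adj i j ∨ D.adj j i
  symm := by constructor; intro i j h; exact h.symm
  loopless := by
    constructor
    intro i h
    rcases h with h | h <;> exact D.acyclic i (Relation.TransGen.single h)

/-- The characteristic imset of a DAG, as a vector indexed by finite vertex sets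
(coordinates on sets of size `< 2` are identically zero). -/
noncomputable def imset (D : DAG V) (S : Finset V) : ℝ :=
  if 2 ≤ S.card ∧ ∃ i ∈ S, ∀ j ∈ S, j ≠ i → D.adj j i then 1 else 0

/-- `D.IsVStructure i j k` means `i → j ← k` is an induced subgraph of `D`
(`i` and `k` non-adjacent). -/
def IsVStructure (D : DAG V) (i j k : V) : Prop :=
  i ≠ k ∧ D.adj i j ∧ D.adj k j ∧ ¬ D.adj i k ∧ ¬ D.adj k i

end DAG

/-- Two DAGs are Markov equivalent iff they have the same skeleton and the same
v-structures. -/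
def MarkovEquiv {V : Type} (D E : DAG V) : Prop :=
  D.skeleton = E.skeleton ∧ ∀ i j k, D.IsVStructure i j k ↔ E.IsVStructure i j k

/-- An arrow `i → j` of `D` is essential if it occurs in every DAG Markov equivalent to `D`. -/
def DAG.Essential {V : Type} (D : DAG V) (i j : V) : Prop :=
  D.adj i j ∧ ∀ E : DAG V, MarkovEquiv D E → E.adj i j

/-- The characteristic imset polytope of an undirected graph `G`: the convex hull of the
characteristic imsets of all DAGs with skeleton `G`. -/
noncomputable def CIM {V : Type} (G : SimpleGraph V) : Set (Finset V → ℝ) :=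
  convexHull ℝ { f | ∃ D : DAG V, D.skeleton = G ∧ f = D.imset }

/-- `conv(u,v)` is an edge (one-dimensional face) of `P`: there is a linear functional whose
maximum over `P` is attained exactly on the segment from `u` to `v`. -/
def IsPolytopeEdge {E : Type*} [AddCommGroup E] [Module ℝ E] (P : Set E) (u v : E) : Prop :=
  u ≠ v ∧ ∃ φ : E →ₗ[ℝ] ℝ, (∀ x ∈ P, φ x ≤ φ u) ∧ ∀ x ∈ P, (φ x = φ u ↔ x ∈ segment ℝ u v)

/-- `P` is a simplex of dimension `d`: the convex hull of `d+1` affinely independent points. -/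
def IsSimplexOfDim {E : Type*} [AddCommGroup E] [Module ℝ E] (P : Set E) (d : ℕ) : Prop :=
  ∃ pts : Fin (d + 1) → E, AffineIndependent ℝ pts ∧ P = convexHull ℝ (Set.range pts)

/-- The standard basis vector indexed by `S`. -/
noncomputable def eVec {V : Type} (S : Finset V) : Finset V → ℝ :=
  fun T => if T = S then 1 else 0

/-!
The imsets of `𝒢` and `ℋ` agree off `S*`. Pair coordinates encode the skeleton, and `a → b ← c`
is a v-structure exactly when `c({a, b, c}) = 1` and `c({a, c}) = 0`, so skeletons and
v-structures can only change on `S*`.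

`S*` has at most three elements: otherwise take `x ∈ S*` with `S* ∖ {x} ⊆ pa_ℋ(x)`, a sink `w` of
`S*` in `𝒢`, and `y ∈ S*` with `y ↛ w` in `𝒢` (it exists as `c_𝒢(S*) = 0`). Both imsets are `1` on
the proper subset `{x, y, w}`, and in `𝒢` the vertex carrying it must be the sink `w`, forcing
`y → w`. When `S* = {i, j, k}` with `i, j ∈ pa_ℋ(k)`, the vertices `i, j` are non-adjacent: otherwise
`S*` would be a clique of the common skeleton, and in a DAG the sink of a clique has all the other
vertices as parents, so `c_𝒢(S*) = 1`.
-/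

lemma Finset.pair_eq_pair_iff {α : Type*} [DecidableEq α] {x y z w : α} :
    ({x, y} : Finset α) = {z, w} ↔ x = z ∧ y = w ∨ x = w ∧ y = z := by
  rw [← Finset.coe_inj]
  push_cast
  exact Set.pair_eq_pair_iff

namespace DAG

variable {V : Type}

/-- `S ⊆ {i} ∪ pa(i)`. -/
def InFamily (D : DAG V) (S : Finset V) (i : V) : Prop :=
  ∀ j ∈ S, j ≠ i → D.adj j i

lemma ne_of_adj (D : DAG V) {a b : V} (h : D.adj a b) : a ≠ b := by
  rintro rfl
  exact D.acyclic a (.single h)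

lemma not_adj_of_adj (D : DAG V) {a b : V} (h : D.adj a b) : ¬ D.adj b a := fun h' =>
  D.acyclic a (.head h (.single h'))

lemma skeleton_adj_iff (D : DAG V) {a b : V} :
    D.skeleton.Adj a b ↔ D.adj a b ∨ D.adj b a := Iff.rfl

lemma exists_sink (D : DAG V) {S : Finset V} (hS : S.Nonempty) :
    ∃ w ∈ S, ∀ y ∈ S, ¬ D.adj w y := by
  let r : S → S → Prop := fun x y => Relation.TransGen D.adj y x
  have : IsTrans S r := ⟨fun _ _ _ h₁ h₂ => h₂.trans h₁⟩
  have : Std.Irrefl r := ⟨fun x => D.acyclic x⟩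
  obtain ⟨⟨w, hw⟩, -, hmin⟩ :=
    (Finite.wellFounded_of_trans_of_irrefl r).has_min Set.univ ⟨⟨_, hS.choose_spec⟩, trivial⟩
  exact ⟨w, hw, fun y hy h => hmin ⟨y, hy⟩ trivial (.single h)⟩

lemma InFamily.mono {D : DAG V} {S T : Finset V} {i : V} (h : D.InFamily S i) (hTS : T ⊆ S) :
    D.InFamily T i := fun j hj => h j (hTS hj)

lemma InFamily.eq {D : DAG V} {S : Finset V} {i i' : V} (h : D.InFamily S i)
    (h' : D.InFamily S i') (hi : i ∈ S) (hi' : i' ∈ S) : i = i' := by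
  by_contra hne
  exact D.not_adj_of_adj (h i' hi' (Ne.symm hne)) (h' i hi hne)

lemma imset_eq_one_iff (D : DAG V) (S : Finset V) :
    D.imset S = 1 ↔ 2 ≤ S.card ∧ ∃ i ∈ S, D.InFamily S i := by
  unfold imset InFamily
  split_ifs with h <;> simp [h]

lemma imset_eq_zero_or_one (D : DAG V) (S : Finset V) : D.imset S = 0 ∨ D.imset S = 1 := by
  unfold imset
  split_ifs <;> simp

lemma imset_eq_one_of_isClique (D : DAG V) {S : Finset V} (hS : 2 ≤ S.card)
    (hclique : D.skeleton.IsClique (S : Set V)) : D.imset S = 1 := by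
  obtain ⟨w, hw, hsink⟩ := D.exists_sink (Finset.card_pos.1 (by omega : 0 < S.card))
  refine (D.imset_eq_one_iff S).2 ⟨hS, w, hw, fun j hj hjw => ?_⟩
  exact (hclique hj hw hjw).resolve_right (hsink j hj)

variable [DecidableEq V]

lemma imset_pair_eq_one_iff (D : DAG V) (a b : V) :
    D.imset {a, b} = 1 ↔ D.skeleton.Adj a b := by
  rw [imset_eq_one_iff, skeleton_adj_iff]
  by_cases hab : a = b
  · subst hab
    simpa using fun h => D.ne_of_adj h rfl
  simp only [Finset.card_pair hab, le_refl, true_and, InFamily, Finset.mem_insert,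
    Finset.mem_singleton, exists_eq_or_imp, exists_eq_left, forall_eq_or_imp, forall_eq]
  grind

lemma isVStructure_iff_imset (D : DAG V) (a b c : V) :
    D.IsVStructure a b c ↔
      a ≠ b ∧ c ≠ b ∧ a ≠ c ∧ D.imset {a, c} ≠ 1 ∧ D.imset {a, b, c} = 1 := by
  simp only [ne_eq]
  rw [imset_pair_eq_one_iff, skeleton_adj_iff, imset_eq_one_iff]
  constructor
  · rintro ⟨hac, hab, hcb, hnac, hnca⟩
    refine ⟨D.ne_of_adj hab, D.ne_of_adj hcb, hac, by tauto, ?_, b, by simp, ?_⟩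
    · exact (Finset.card_pair (D.ne_of_adj hab)).symm.le.trans (Finset.card_le_card (by grind))
    · intro j hj hjb
      simp only [Finset.mem_insert, Finset.mem_singleton] at hj
      rcases hj with rfl | rfl | rfl <;> tauto
  · rintro ⟨hab, hcb, hac, hnadj, -, m, hm, hfam⟩
    simp only [Finset.mem_insert, Finset.mem_singleton] at hm
    rcases hm with rfl | rfl | rfl
    · exact absurd (Or.inr (hfam c (by simp) (Ne.symm hac))) hnadj
    · exact ⟨hac, hfam a (by simp) hab, hfam c (by simp) hcb, fun h => hnadj (.inl h),
        fun h => hnadj (.inr h)⟩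
    · exact absurd (Or.inl (hfam a (by simp) hac)) hnadj

lemma isVStructure_iff_of_imset_eq {D E : DAG V} {a b c : V}
    (hpair : D.imset {a, c} = E.imset {a, c}) (htriple : D.imset {a, b, c} = E.imset {a, b, c}) :
    D.IsVStructure a b c ↔ E.IsVStructure a b c := by
  simp only [isVStructure_iff_imset, hpair, htriple]

lemma IsVStructure.card_eq_three {D : DAG V} {a b c : V} (h : D.IsVStructure a b c) :
    ({a, b, c} : Finset V).card = 3 :=
  Finset.card_eq_three.2 ⟨a, b, c, D.ne_of_adj h.2.1, h.1, (D.ne_of_adj h.2.2.1).symm, rfl⟩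

lemma IsVStructure.inFamily {D : DAG V} {a b c : V} (h : D.IsVStructure a b c) :
    D.InFamily {a, b, c} b := by
  intro j hj hjb
  simp only [Finset.mem_insert, Finset.mem_singleton] at hj
  rcases hj with rfl | rfl | rfl
  exacts [h.2.1, absurd rfl hjb, h.2.2.1]

lemma IsVStructure.eq_of_finset_eq {D : DAG V} {a b c a' b' c' : V} (h : D.IsVStructure a b c)
    (h' : D.IsVStructure a' b' c') (hS : ({a, b, c} : Finset V) = {a', b', c'}) :
    b = b' ∧ (a = a' ∧ c = c' ∨ a = c' ∧ c = a') := by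
  have hb : b = b' := h.inFamily.eq (hS ▸ h'.inFamily) (by simp) (hS ▸ by simp)
  subst hb
  have ha : a ∈ ({a', b, c'} : Finset V) := hS ▸ by simp
  have hc : c ∈ ({a', b, c'} : Finset V) := hS ▸ by simp
  have ha' : a' ∈ ({a, b, c} : Finset V) := hS ▸ by simp
  simp only [Finset.mem_insert, Finset.mem_singleton] at ha hc ha'
  have := h.card_eq_three
  have := h'.card_eq_three
  grind

end DAG

section Addition

variable {V : Type} {D E : DAG V} {S : Finset V}

lemma imset_eq_of_eq_add_eVec (hadd : E.imset = D.imset + eVec S) {T : Finset V} (hT : T ≠ S) :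
    E.imset T = D.imset T := by
  simpa [eVec, hT] using congrFun hadd T

lemma imset_self_of_eq_add_eVec (hadd : E.imset = D.imset + eVec S) :
    E.imset S = 1 ∧ D.imset S = 0 := by
  have h : E.imset S = D.imset S + 1 := by simpa [eVec] using congrFun hadd S
  rcases D.imset_eq_zero_or_one S with hD | hD
  · exact ⟨by rw [h, hD]; norm_num, hD⟩
  · rcases E.imset_eq_zero_or_one S with hE | hE <;> rw [hE, hD] at h <;> norm_num at h

variable [DecidableEq V]

lemma card_eq_two_or_three_of_eq_add_eVec (hadd : E.imset = D.imset + eVec S) :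
    S.card = 2 ∨ S.card = 3 := by
  obtain ⟨hE, hD⟩ := imset_self_of_eq_add_eVec hadd
  obtain ⟨hS2, x, hx, hxfam⟩ := (E.imset_eq_one_iff S).1 hE
  by_contra! hS
  replace hS : 4 ≤ S.card := by omega
  obtain ⟨w, hw, hsink⟩ := D.exists_sink ⟨x, hx⟩
  obtain ⟨y, hy, hyw, hnyw⟩ : ∃ y ∈ S, y ≠ w ∧ ¬ D.adj y w := by
    by_contra! h
    simp [(D.imset_eq_one_iff S).2 ⟨by omega, w, hw, h⟩] at hD
  set T : Finset V := {x, y, w}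
  have hTS : T ⊆ S := by grind
  have hT2 : 2 ≤ T.card :=
    (Finset.card_pair hyw).symm.le.trans (Finset.card_le_card (by grind))
  have hTne : T ≠ S := by
    rintro rfl
    have : T.card ≤ 3 := Finset.card_le_three
    omega
  have hDT : D.imset T = 1 := by
    rw [← imset_eq_of_eq_add_eVec hadd hTne, E.imset_eq_one_iff]
    exact ⟨hT2, x, by simp [T], hxfam.mono hTS⟩
  obtain ⟨-, m, hm, hmfam⟩ := (D.imset_eq_one_iff T).1 hDT
  obtain rfl : m = w := by
    by_contra hmw
    exact hsink m (hTS hm) (hmfam w (by simp [T]) (Ne.symm hmw))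
  exact hnyw (hmfam y (by simp [T]) hyw)

section Pair

variable {i j : V}

lemma not_adj_of_eq_add_eVec_pair (hadd : E.imset = D.imset + eVec {i, j}) :
    ¬ D.skeleton.Adj i j := by
  rw [← D.imset_pair_eq_one_iff, (imset_self_of_eq_add_eVec hadd).2]
  norm_num

lemma skeleton_adj_iff_of_eq_add_eVec_pair (hadd : E.imset = D.imset + eVec {i, j}) (a b : V) :
    E.skeleton.Adj a b ↔ D.skeleton.Adj a b ∨ (a = i ∧ b = j) ∨ (a = j ∧ b = i) := by
  rw [← Finset.pair_eq_pair_iff, ← E.imset_pair_eq_one_iff, ← D.imset_pair_eq_one_iff]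
  by_cases hab : ({a, b} : Finset V) = {i, j}
  · simp [hab, (imset_self_of_eq_add_eVec hadd).1]
  · simp [hab, imset_eq_of_eq_add_eVec hadd hab]

lemma isVStructure_of_eq_add_eVec_pair (hadd : E.imset = D.imset + eVec {i, j}) {a b c : V}
    (hv : E.IsVStructure a b c) : D.IsVStructure a b c ∨ (a = i ∧ c = j) ∨ (a = j ∧ c = i) := by
  rw [← Finset.pair_eq_pair_iff]
  by_cases hac : ({a, c} : Finset V) = {i, j}
  · exact .inr hac
  have habc : ({a, b, c} : Finset V) ≠ {i, j} := fun h => by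
    have := h ▸ hv.card_eq_three
    have := Finset.card_le_two (a := i) (b := j)
    omega
  exact .inl <| (DAG.isVStructure_iff_of_imset_eq (imset_eq_of_eq_add_eVec hadd hac).symm
    (imset_eq_of_eq_add_eVec hadd habc).symm).2 hv

end Pair

lemma skeleton_eq_of_eq_add_eVec (hadd : E.imset = D.imset + eVec S) (hS : 3 ≤ S.card) :
    D.skeleton = E.skeleton := by
  ext a b
  have hab : ({a, b} : Finset V) ≠ S := by
    rintro rfl
    have := Finset.card_le_two (a := a) (b := b)
    omega
  rw [← D.imset_pair_eq_one_iff, ← E.imset_pair_eq_one_iff, imset_eq_of_eq_add_eVec hadd hab]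

lemma exists_isVStructure_of_eq_add_eVec (hadd : E.imset = D.imset + eVec S) (hS : S.card = 3) :
    ∃ i j k, S = {i, j, k} ∧ E.IsVStructure i k j := by
  obtain ⟨hE, hD⟩ := imset_self_of_eq_add_eVec hadd
  have hskel := skeleton_eq_of_eq_add_eVec hadd hS.ge
  obtain ⟨-, k, hk, hkfam⟩ := (E.imset_eq_one_iff S).1 hE
  obtain ⟨i, j, hij, hrest⟩ : ∃ i j, i ≠ j ∧ S.erase k = {i, j} :=
    Finset.card_eq_two.1 (by rw [Finset.card_erase_of_mem hk, hS])
  have hSeq : S = {i, j, k} := by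
    rw [← Finset.insert_erase hk, hrest, Finset.insert_comm, Finset.pair_comm]
  have hik : i ≠ k := Finset.ne_of_mem_erase (by simp [hrest] : i ∈ S.erase k)
  have hjk : j ≠ k := Finset.ne_of_mem_erase (by simp [hrest] : j ∈ S.erase k)
  have hki : E.adj i k := hkfam i (by simp [hSeq]) hik
  have hkj : E.adj j k := hkfam j (by simp [hSeq]) hjk
  have hnadj : ¬ E.skeleton.Adj i j := by
    intro hadj
    have hclique : D.skeleton.IsClique (S : Set V) := by
      rw [hskel, hSeq]
      push_cast
      simp only [SimpleGraph.isClique_insert, Set.mem_insert_iff, Set.mem_singleton_iff,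
        forall_eq_or_imp, forall_eq]
      exact ⟨⟨Set.pairwise_singleton _ _, fun _ => .inl hkj⟩, fun _ => hadj, fun _ => .inl hki⟩
    simpa [hD] using D.imset_eq_one_of_isClique (by omega) hclique
  exact ⟨i, j, k, hSeq, hij, hki, hkj, fun h => hnadj (.inl h), fun h => hnadj (.inr h)⟩

section Triple

variable {i j k : V}

lemma not_isVStructure_of_eq_add_eVec_triple (hadd : E.imset = D.imset + eVec {i, j, k})
    {a b c : V} (habc : ({a, b, c} : Finset V) = {i, j, k}) : ¬ D.IsVStructure a b c := by
  rw [DAG.isVStructure_iff_imset, habc, (imset_self_of_eq_add_eVec hadd).2]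
  norm_num

lemma isVStructure_iff_of_eq_add_eVec_triple (hadd : E.imset = D.imset + eVec {i, j, k})
    (hv : E.IsVStructure i k j) {a b c : V}
    (habc : ¬ ((a = i ∧ b = k ∧ c = j) ∨ (a = j ∧ b = k ∧ c = i))) :
    D.IsVStructure a b c ↔ E.IsVStructure a b c := by
  by_cases hT : ({a, b, c} : Finset V) = {i, j, k}
  · refine iff_of_false (not_isVStructure_of_eq_add_eVec_triple hadd hT) fun hv' => habc ?_
    obtain ⟨rfl, h⟩ := hv'.eq_of_finset_eq hv (by rw [hT, Finset.pair_comm])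
    tauto
  have hS : 3 ≤ ({i, j, k} : Finset V).card := by
    simpa [Finset.pair_comm] using hv.card_eq_three.ge
  have hac : ({a, c} : Finset V) ≠ {i, j, k} := by
    intro h
    have := Finset.card_le_two (a := a) (b := c)
    rw [← h] at hS
    omega
  exact DAG.isVStructure_iff_of_imset_eq (imset_eq_of_eq_add_eVec hadd hac).symm
    (imset_eq_of_eq_add_eVec hadd hT).symm

end Triple

end Addition

theorem addition_characterization_general (p : ℕ) (D E : DAG (Fin p)) (Sstar : Finset (Fin p))
    (hadd : E.imset = D.imset + eVec Sstar) :
    Xor'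
      (∃ i j : Fin p, i ≠ j ∧ Sstar = {i, j} ∧
        (∀ a b c, E.IsVStructure a b c →
          D.IsVStructure a b c ∨ (a = i ∧ c = j) ∨ (a = j ∧ c = i)) ∧
        ¬ D.skeleton.Adj i j ∧
        (∀ a b, E.skeleton.Adj a b ↔
          (D.skeleton.Adj a b ∨ (a = i ∧ b = j) ∨ (a = j ∧ b = i))))
      (∃ i j k : Fin p, Sstar = {i, j, k} ∧ D.skeleton = E.skeleton ∧
        E.IsVStructure i k j ∧ ¬ D.IsVStructure i k j ∧
        (∀ a b c, ¬ ((a = i ∧ b = k ∧ c = j) ∨ (a = j ∧ b = k ∧ c = i)) →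
          (D.IsVStructure a b c ↔ E.IsVStructure a b c))) := by
  rcases card_eq_two_or_three_of_eq_add_eVec hadd with h2 | h3
  · obtain ⟨i, j, hij, rfl⟩ := Finset.card_eq_two.1 h2
    refine .inl ⟨⟨i, j, hij, rfl, fun _ _ _ => isVStructure_of_eq_add_eVec_pair hadd,
      not_adj_of_eq_add_eVec_pair hadd, skeleton_adj_iff_of_eq_add_eVec_pair hadd⟩, ?_⟩
    rintro ⟨i', j', k', hS, -, hv, -⟩
    have := hv.card_eq_three
    rw [Finset.pair_comm, ← hS] at this
    omega
  · obtain ⟨i, j, k, rfl, hv⟩ := exists_isVStructure_of_eq_add_eVec hadd h3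
    refine .inr ⟨⟨i, j, k, rfl, skeleton_eq_of_eq_add_eVec hadd h3.ge, hv,
      not_isVStructure_of_eq_add_eVec_triple hadd (by rw [Finset.pair_comm]),
      fun _ _ _ => isVStructure_iff_of_eq_add_eVec_triple hadd hv⟩, ?_⟩
    rintro ⟨i', j', hij', hS, -⟩
    rw [hS, Finset.card_pair hij'] at h3
    omega

/-- **Addition characterization.**  If `c_ℋ = c_𝒢 + e_{S*}` with `|S*| ≥ 2`, then exactly one of:
(i) `S* = {i,j}`, every v-structure of `ℋ` is one of `𝒢` except possibly those of the form
`i → k ← j`, and the skeletons differ exactly by the edge `{i,j}` (present in `ℋ`, absent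
in `𝒢`); (ii) `S* = {i,j,k}`, the skeletons agree, and the v-structures differ by exactly
the single v-structure `i → k ← j` (present in `ℋ`, absent in `𝒢`).  In particular
`|S*| ≥ 4` is impossible. -/
theorem addition_characterization (p : ℕ) (D E : DAG (Fin p)) (Sstar : Finset (Fin p))
    (hcard : 2 ≤ Sstar.card) (hadd : E.imset = D.imset + eVec Sstar) :
    Xor'
      (∃ i j : Fin p, i ≠ j ∧ Sstar = {i, j} ∧
        (∀ a b c, E.IsVStructure a b c →
          D.IsVStructure a b c ∨ (a = i ∧ c = j) ∨ (a = j ∧ c = i)) ∧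
        ¬ D.skeleton.Adj i j ∧
        (∀ a b, E.skeleton.Adj a b ↔
          (D.skeleton.Adj a b ∨ (a = i ∧ b = j) ∨ (a = j ∧ b = i))))
      (∃ i j k : Fin p, Sstar = {i, j, k} ∧ D.skeleton = E.skeleton ∧
        E.IsVStructure i k j ∧ ¬ D.IsVStructure i k j ∧
        (∀ a b c, ¬ ((a = i ∧ b = k ∧ c = j) ∨ (a = j ∧ b = k ∧ c = i)) →
          (D.IsVStructure a b c ↔ E.IsVStructure a b c))) :=
  addition_characterization_general p D E Sstar hadd
end

section
/- Let G' = ([p−1], E') be a vertex-disjoint union of complete graphs K_{p_1}, …, K_{p_m} (so Σ_{s∈[m]} p_s = p−1), and let G = ([p], E) be the graph on [p] in which node p is adjacent to every node of [p−1] and the induced subgraph on [p−1] equals G'. Then CIM_G is a simplex of dimension d = 2^{p−1} − 1 − Σ_{s∈[m]} (2^{p_s} − 1). -/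
open Classical

/-- The graph `G` on `Option (Fin n)`: node `none` (the extra node `p`) is adjacent to every
other node, and the induced graph on `Fin n` (the nodes `[p-1]`) is the vertex disjoint union
of complete graphs given by the block assignment `blk`. -/
def starCliqueGraph (n m : ℕ) (blk : Fin n → Fin m) : SimpleGraph (Option (Fin n)) where
  Adj i j := i ≠ j ∧
    (i = none ∨ j = none ∨ ∃ a b : Fin n, i = some a ∧ j = some b ∧ blk a = blk b)
  symm := by
    constructor
    rintro i j ⟨hne, h⟩
    refine ⟨hne.symm, ?_⟩
    rcases h with h | h | ⟨a, b, ha, hb, hab⟩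
    · exact Or.inr (Or.inl h)
    · exact Or.inl h
    · exact Or.inr (Or.inr ⟨b, a, hb, ha, hab.symm⟩)
  loopless := by constructor; rintro i ⟨h, -⟩; exact h rfl

/-!
For a DAG `D` with skeleton `G`, a set `S` has `c_D(S) = 1` iff it has a sink in `D`. If the
non-apex part of `S` lies in one clique of `G'`, then `S` is a clique of `G` and always has a sink;
otherwise the only possible sink is the apex, and it is one iff the non-apex part of `S` lies in
the parent set `P` of the apex. So `c_D` depends only on `P`, and only up to identifying all `P`
inside a single clique with `∅`. Every `P` is realised by ordering parents of the apex before
it and all other nodes after it. The resulting points are affinely independent: for `T` not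
inside a single clique, the coordinate at `T ∪ {p}` of the point for `P` is `[T ⊆ P]`, a
unitriangular system. Counting the admissible `P` gives the dimension.
-/

open Finset

theorem linearIndependent_of_unitriangular {ι κ R : Type*} [Finite ι] [PartialOrder ι] [Ring R]
    [NoZeroDivisors R] (v : ι → κ → R) (c : ι → κ) (hdiag : ∀ i, v i (c i) ≠ 0)
    (htri : ∀ i j, v j (c i) ≠ 0 → i ≤ j) : LinearIndependent R v := by
  cases nonempty_fintype ι
  rw [Fintype.linearIndependent_iff]
  intro g hg
  by_contra! ⟨i₀, hi₀⟩
  obtain ⟨i, -, hmax⟩ := Finite.exists_le_maximal (p := fun i => g i ≠ 0) hi₀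
  have hsum := congrFun hg (c i)
  simp only [Finset.sum_apply, Pi.smul_apply, smul_eq_mul, Pi.zero_apply] at hsum
  rw [sum_eq_single i] at hsum
  · exact (mul_ne_zero hmax.prop (hdiag i)) hsum
  · intro j _ hji
    by_cases hgj : g j = 0
    · rw [hgj, zero_mul]
    by_cases hvj : v j (c i) = 0
    · rw [hvj, mul_zero]
    exact absurd (hmax.eq_of_le hgj (htri i j hvj)).symm hji
  · exact fun h => absurd (mem_univ i) h

theorem affineIndependent_option_of_linearIndependent {k V ι : Type*} [Ring k] [AddCommGroup V]
    [Module k V] {p : Option ι → V} (h : LinearIndependent k fun i => p (some i) - p none) :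
    AffineIndependent k p := by
  rw [affineIndependent_iff_linearIndependent_vsub k p none]
  convert h.comp (fun i : {x // x ≠ none} => i.1.get (Option.isSome_iff_ne_none.2 i.2))
    (fun i j hij => Subtype.ext (Option.get_inj.1 hij)) with i
  simp

variable {V : Type}

theorem DAG.exists_sink_of_isClique (D : DAG V) {S : Finset V} (hS : S.Nonempty)
    (hclique : D.skeleton.IsClique (S : Set V)) : ∃ i ∈ S, ∀ j ∈ S, j ≠ i → D.adj j i := by
  let r : S → S → Prop := fun a b => Relation.TransGen D.adj b a
  have : IsTrans S r := ⟨fun _ _ _ hab hbc => hbc.trans hab⟩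
  have : Std.Irrefl r := ⟨fun a h => D.acyclic a h⟩
  obtain ⟨⟨i, hi⟩, -, hmin⟩ :=
    (Finite.wellFounded_of_trans_of_irrefl r).has_min Set.univ ⟨⟨_, hS.choose_spec⟩, trivial⟩
  refine ⟨i, hi, fun j hj hji => (hclique hj hi hji).resolve_right fun h => ?_⟩
  exact hmin ⟨j, hj⟩ trivial (Relation.TransGen.single h)

def SimpleGraph.orient (G : SimpleGraph V) {α : Type*} [LinearOrder α] (f : V → α) : DAG V where
  adj i j := G.Adj i j ∧ f i < f j
  acyclic v hv := by
    have := hv.lift f fun _ _ h => h.2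
    rw [Function.onFun, Relation.transGen_eq_self] at this
    exact lt_irrefl _ this

theorem SimpleGraph.skeleton_orient (G : SimpleGraph V) {α : Type*} [LinearOrder α] {f : V → α}
    (hf : ∀ ⦃i j⦄, G.Adj i j → f i ≠ f j) : (G.orient f).skeleton = G := by
  ext i j
  refine ⟨by rintro (⟨h, -⟩ | ⟨h, -⟩) <;> [exact h; exact h.symm], fun h => ?_⟩
  rcases (hf h).lt_or_gt with hlt | hgt
  exacts [Or.inl ⟨h, hlt⟩, Or.inr ⟨h.symm, hgt⟩]

section StarOfCliques

variable {n m : ℕ} (blk : Fin n → Fin m)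

def InSingleBlock (T : Finset (Fin n)) : Prop :=
  ∀ a ∈ T, ∀ b ∈ T, blk a = blk b

variable {blk}

theorem InSingleBlock.mono {T T' : Finset (Fin n)} (h : InSingleBlock blk T') (hT : T ⊆ T') :
    InSingleBlock blk T :=
  fun a ha b hb => h a (hT ha) b (hT hb)

theorem nonempty_of_not_inSingleBlock {T : Finset (Fin n)} (hT : ¬InSingleBlock blk T) :
    T.Nonempty :=
  nonempty_iff_ne_empty.2 fun h => hT (by simp [h, InSingleBlock])

theorem starCliqueGraph_adj_some {a b : Fin n} :
    (starCliqueGraph n m blk).Adj (some a) (some b) ↔ a ≠ b ∧ blk a = blk b := by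
  simp [starCliqueGraph]

theorem isClique_starCliqueGraph {S : Finset (Option (Fin n))}
    (hS : InSingleBlock blk S.eraseNone) : (starCliqueGraph n m blk).IsClique (S : Set _) := by
  rintro (_ | a) ha (_ | b) hb hab
  · exact absurd rfl hab
  · exact ⟨hab, Or.inl rfl⟩
  · exact ⟨hab, Or.inr (Or.inl rfl)⟩
  · exact ⟨hab, Or.inr <| Or.inr
      ⟨a, b, rfl, rfl, hS a (mem_eraseNone.2 ha) b (mem_eraseNone.2 hb)⟩⟩

variable (blk)

/-- The imset of a DAG with skeleton `starCliqueGraph n m blk` in which the apex `none` has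
parent set `P`. -/
noncomputable def starImset (P : Finset (Fin n)) (S : Finset (Option (Fin n))) : ℝ :=
  if 2 ≤ #S ∧ (InSingleBlock blk S.eraseNone ∨ (none ∈ S ∧ S.eraseNone ⊆ P)) then 1 else 0

theorem imset_eq_starImset {D : DAG (Option (Fin n))}
    (hD : D.skeleton = starCliqueGraph n m blk) :
    D.imset = starImset blk {a | D.adj (some a) none} := by
  funext S
  rw [DAG.imset, starImset]
  congr 1
  refine propext (and_congr_right fun hS => ⟨?_, ?_⟩)
  · rintro ⟨_ | a, hi, hsink⟩
    · exact Or.inr ⟨hi, fun b hb => by simpa using hsink _ (mem_eraseNone.1 hb) (by simp)⟩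
    · have hblk : ∀ x ∈ S.eraseNone, blk x = blk a := fun x hx => by
        by_cases hxa : x = a
        · rw [hxa]
        have hadj : D.skeleton.Adj (some x) (some a) :=
          Or.inl (hsink _ (mem_eraseNone.1 hx) (by simpa using hxa))
        exact (starCliqueGraph_adj_some.1 (hD ▸ hadj)).2
      exact Or.inl fun b hb c hc => by rw [hblk b hb, hblk c hc]
  · rintro (hsingle | ⟨hnone, hsub⟩)
    · exact D.exists_sink_of_isClique (card_pos.1 (by omega))
        (hD ▸ isClique_starCliqueGraph hsingle)
    · refine ⟨none, hnone, fun j hj hjn => ?_⟩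
      obtain ⟨a, rfl⟩ := Option.ne_none_iff_exists'.1 hjn
      simpa using hsub (mem_eraseNone.2 hj)

theorem starImset_eq_starImset_empty {P : Finset (Fin n)} (hP : InSingleBlock blk P) :
    starImset blk P = starImset blk ∅ := by
  funext S
  refine if_congr (and_congr_right fun _ => ?_) rfl rfl
  rw [or_iff_left_of_imp fun h => hP.mono h.2, or_iff_left_of_imp fun h => ?_]
  rw [subset_empty.1 h.2]
  simp [InSingleBlock]

theorem starImset_insertNone {T : Finset (Fin n)} (hT : ¬InSingleBlock blk T)
    (P : Finset (Fin n)) : starImset blk P T.insertNone = if T ⊆ P then 1 else 0 := by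
  simp [starImset, hT, nonempty_of_not_inSingleBlock hT]

/-- A linear order on the nodes putting the parents `P` of the apex before it and all other
nodes after it. -/
def apexOrder (P : Finset (Fin n)) (x : Option (Fin n)) : ℕ ×ₗ WithBot (Fin n) :=
  toLex (x.elim 1 fun a => if a ∈ P then 0 else 2, x)

theorem skeleton_orient_apexOrder (P : Finset (Fin n)) :
    ((starCliqueGraph n m blk).orient (apexOrder P)).skeleton = starCliqueGraph n m blk :=
  SimpleGraph.skeleton_orient _ fun _ _ hij h => hij.1 (congrArg (fun x => (ofLex x).2) h)

theorem parents_orient_apexOrder (P : Finset (Fin n)) :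
    ({a | ((starCliqueGraph n m blk).orient (apexOrder P)).adj (some a) none} : Finset _) = P := by
  ext a
  by_cases ha : a ∈ P <;>
    simp [SimpleGraph.orient, apexOrder, starCliqueGraph, Prod.Lex.toLex_lt_toLex, ha]

/-- The vertices of `CIM_G`: `none` stands for every parent set inside a single clique. -/
noncomputable def starVertex (o : Option {Q : Finset (Fin n) // ¬InSingleBlock blk Q}) :
    Finset (Option (Fin n)) → ℝ :=
  starImset blk (o.elim ∅ Subtype.val)

theorem setOf_imset_eq_range_starVertex :
    {f | ∃ D : DAG (Option (Fin n)), D.skeleton = starCliqueGraph n m blk ∧ f = D.imset} =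
      Set.range (starVertex blk) := by
  ext f
  constructor
  · rintro ⟨D, hD, rfl⟩
    rw [imset_eq_starImset blk hD]
    by_cases hP : InSingleBlock blk {a | D.adj (some a) none}
    · exact ⟨none, (starImset_eq_starImset_empty blk hP).symm⟩
    · exact ⟨some ⟨_, hP⟩, rfl⟩
  · rintro ⟨o, rfl⟩
    refine ⟨_, skeleton_orient_apexOrder blk (o.elim ∅ Subtype.val), ?_⟩
    rw [imset_eq_starImset blk (skeleton_orient_apexOrder blk _), parents_orient_apexOrder]
    rfl

theorem affineIndependent_starVertex : AffineIndependent ℝ (starVertex blk) := by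
  refine affineIndependent_option_of_linearIndependent <|
    linearIndependent_of_unitriangular _ (fun T => T.1.insertNone) (fun T => ?_) fun T Q h => ?_
  all_goals simp_all [starVertex, starImset_insertNone blk T.2,
    (nonempty_of_not_inSingleBlock T.2).ne_empty]

theorem card_filter_inSingleBlock :
    #{Q : Finset (Fin n) | InSingleBlock blk Q} = ∑ s, (2 ^ #{a | blk a = s} - 1) + 1 := by
  have hsplit : ({Q | InSingleBlock blk Q} : Finset (Finset (Fin n))) =
      insert ∅ (univ.biUnion fun s => (powerset {a | blk a = s}).erase ∅) := by
    ext Q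
    simp only [mem_filter, mem_univ, true_and, mem_insert, mem_biUnion, mem_erase, mem_powerset]
    constructor
    · intro hQ
      rcases Q.eq_empty_or_nonempty with rfl | ⟨a, ha⟩
      · exact Or.inl rfl
      · exact Or.inr ⟨blk a, ne_empty_of_mem ha, fun b hb => by simpa using hQ b hb a ha⟩
    · rintro (rfl | ⟨s, -, hQs⟩)
      · simp [InSingleBlock]
      · intro a ha b hb
        rw [(mem_filter.1 (hQs ha)).2, (mem_filter.1 (hQs hb)).2]
  rw [hsplit, card_insert_of_notMem (by simp), card_biUnion]
  · simp [card_erase_of_mem, card_powerset]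
  · intro s _ t _ hst
    refine disjoint_left.2 fun Q hQs hQt => ?_
    obtain ⟨a, ha⟩ := nonempty_of_ne_empty (mem_erase.1 hQs).1
    exact hst ((mem_filter.1 ((mem_powerset.1 (mem_erase.1 hQs).2) ha)).2.symm.trans
      (mem_filter.1 ((mem_powerset.1 (mem_erase.1 hQt).2) ha)).2)

theorem card_not_inSingleBlock :
    (Fintype.card {Q : Finset (Fin n) // ¬InSingleBlock blk Q} : ℤ) =
      2 ^ n - 1 - ∑ s, ((2 : ℤ) ^ #{a | blk a = s} - 1) := by
  have htotal :=
    card_filter_add_card_filter_not (s := univ) fun Q : Finset (Fin n) => InSingleBlock blk Q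
  rw [card_filter_inSingleBlock, card_univ, Fintype.card_finset, Fintype.card_fin] at htotal
  rw [Fintype.card_subtype, eq_sub_iff_add_eq, ← Nat.cast_ofNat, ← Nat.cast_pow, ← htotal]
  push_cast [Nat.one_le_two_pow]
  ring

end StarOfCliques

theorem cim_star_of_cliques_simplex_general (n m : ℕ) (blk : Fin n → Fin m) (d : ℕ)
    (hd : (d : ℤ) = 2 ^ n - 1 -
      ∑ s : Fin m, ((2 : ℤ) ^ ((Finset.univ.filter (fun a => blk a = s)).card) - 1)) :
    IsSimplexOfDim (CIM (starCliqueGraph n m blk)) d := by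
  have hcard : Fintype.card (Option {Q : Finset (Fin n) // ¬InSingleBlock blk Q}) = d + 1 := by
    rw [Fintype.card_option]
    have := (card_not_inSingleBlock blk).trans hd.symm
    omega
  let e := (Fintype.equivFinOfCardEq hcard).symm
  refine ⟨starVertex blk ∘ e, (affineIndependent_starVertex blk).comp_embedding e.toEmbedding, ?_⟩
  rw [CIM, setOf_imset_eq_range_starVertex, Set.range_comp, e.range_eq_univ, Set.image_univ]

/-- **CIM of a star of cliques is a simplex.**  If `G'` on `[p-1]` is a vertex disjoint
union of complete graphs `K_{p_1}, …, K_{p_m}` (blocks of `blk`, each nonempty by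
surjectivity, with `∑ p_s = p - 1 = n`), and `G` additionally joins a new node to all of
`[p-1]`, then `CIM_G` is a simplex of dimension
`d = 2^{p-1} - 1 - ∑_{s ∈ [m]} (2^{p_s} - 1)`. -/
theorem cim_star_of_cliques_simplex (n m : ℕ) (blk : Fin n → Fin m)
    (hsurj : Function.Surjective blk) (d : ℕ)
    (hd : (d : ℤ) = 2 ^ n - 1 -
      ∑ s : Fin m, ((2 : ℤ) ^ ((Finset.univ.filter (fun a => blk a = s)).card) - 1)) :
    IsSimplexOfDim (CIM (starCliqueGraph n m blk)) d :=
  cim_star_of_cliques_simplex_general n m blk d hd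
end

section
/- Let 𝒢 and ℋ be two essential graphs on node set [p] with the same skeleton G, and suppose G is a tree. Then j ∈ Δ(𝒢, ℋ) if and only if 𝒢 and ℋ contain different sets of v-structures centered at j (i.e., there is a v-structure a → j ← b present in exactly one of 𝒢 and ℋ). -/
open Classical

/-- The set `Δ(𝒢,ℋ)` of nodes `i` at which the characteristic imsets of `D` and `E` differ
on a set `S` with `i ∈ S ⊆ ne(i) ∪ {i}` and `|S| ≥ 3`. -/
def deltaSet {V : Type} (D E : DAG V) : Set V :=
  { i | ∃ S : Finset V, i ∈ S ∧ (↑S : Set V) ⊆ insert i (D.skeleton.neighborSet i) ∧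
      3 ≤ S.card ∧ D.imset S ≠ E.imset S }

/-!
A tree is triangle-free, so two neighbours of `j` are never adjacent. Hence a set `S` with
`j ∈ S ⊆ ne(j) ∪ {j}` and `|S| ≥ 3` can only have `j` as its sink, i.e. `c(S) = 1` iff
`S ∖ {j} ⊆ pa(j)`, and any two parents of `j` form a v-structure. Both sides of the theorem
thus say that some subset of `ne(j)` of size at least two lies in exactly one of the two
parent sets of `j`, and it suffices to look at subsets of size two.
-/

open Finset

lemma Finset.exists_mem_ne_ne {α : Type*} {s : Finset α} (hs : 3 ≤ #s) (a b : α) :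
    ∃ c ∈ s, c ≠ a ∧ c ≠ b := by
  obtain ⟨c, hc, hcb⟩ := exists_mem_ne (s := s.erase a)
    (by have := pred_card_le_card_erase (s := s) (a := a); omega) b
  exact ⟨c, mem_of_mem_erase hc, ne_of_mem_erase hc, hcb⟩

section PairsInFinsets

variable {V : Type} {P Q : V → Prop} {N : Set V} {j : V}

lemma exists_pair_of_forall_of_not_forall {S : Finset V} (hS : 3 ≤ #S)
    (hP : ∀ k ∈ S, k ≠ j → P k) (hQ : ¬ ∀ k ∈ S, k ≠ j → Q k) :
    ∃ a b, (a ≠ b ∧ P a ∧ P b) ∧ ¬ (a ≠ b ∧ Q a ∧ Q b) := by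
  push Not at hQ
  obtain ⟨a, haS, haj, hQa⟩ := hQ
  obtain ⟨b, hbS, hbj, hba⟩ := exists_mem_ne_ne hS j a
  exact ⟨a, b, ⟨hba.symm, hP a haS haj, hP b hbS hbj⟩, fun h => hQa h.2.1⟩

lemma exists_triple_of_pair (hPN : ∀ k, P k → k ∈ N) (hjN : j ∉ N) {a b : V}
    (hP : a ≠ b ∧ P a ∧ P b) (hQ : ¬ (a ≠ b ∧ Q a ∧ Q b)) :
    ∃ S : Finset V, j ∈ S ∧ ↑S ⊆ insert j N ∧ 3 ≤ #S ∧
      (∀ k ∈ S, k ≠ j → P k) ∧ ¬ ∀ k ∈ S, k ≠ j → Q k := by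
  obtain ⟨hab, hPa, hPb⟩ := hP
  have haj : a ≠ j := fun h => hjN (h ▸ hPN a hPa)
  have hbj : b ≠ j := fun h => hjN (h ▸ hPN b hPb)
  refine ⟨{a, j, b}, by simp, ?_, ?_, ?_, ?_⟩
  · simp [Set.insert_subset_iff, hPN a hPa, hPN b hPb]
  · rw [card_insert_of_notMem (by simp [haj, hab]), card_pair hbj.symm]
  · simp [hPa, hPb]
  · exact fun h => hQ ⟨hab, h a (by simp) haj, h b (by simp) hbj⟩

theorem exists_finset_not_iff_iff_exists_pair (hPN : ∀ k, P k → k ∈ N)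
    (hQN : ∀ k, Q k → k ∈ N) (hjN : j ∉ N) :
    (∃ S : Finset V, j ∈ S ∧ ↑S ⊆ insert j N ∧ 3 ≤ #S ∧
      ¬ ((∀ k ∈ S, k ≠ j → P k) ↔ ∀ k ∈ S, k ≠ j → Q k)) ↔
    ∃ a b, ¬ ((a ≠ b ∧ P a ∧ P b) ↔ (a ≠ b ∧ Q a ∧ Q b)) := by
  simp only [← xor_iff_not_iff, Xor]
  constructor
  · rintro ⟨S, -, -, hS, ⟨hP, hQ⟩ | ⟨hQ, hP⟩⟩
    · obtain ⟨a, b, h⟩ := exists_pair_of_forall_of_not_forall hS hP hQ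
      exact ⟨a, b, .inl h⟩
    · obtain ⟨a, b, h⟩ := exists_pair_of_forall_of_not_forall hS hQ hP
      exact ⟨a, b, .inr h⟩
  · rintro ⟨a, b, ⟨hP, hQ⟩ | ⟨hQ, hP⟩⟩
    · obtain ⟨S, hjS, hSN, hS, h⟩ := exists_triple_of_pair hPN hjN hP hQ
      exact ⟨S, hjS, hSN, hS, .inl h⟩
    · obtain ⟨S, hjS, hSN, hS, h⟩ := exists_triple_of_pair hQN hjN hQ hP
      exact ⟨S, hjS, hSN, hS, .inr h⟩

end PairsInFinsets

namespace DAG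

variable {V : Type} {D E : DAG V} {j : V} {S : Finset V}

lemma imset_eq_imset_iff : D.imset S = E.imset S ↔ (D.imset S = 1 ↔ E.imset S = 1) := by
  unfold imset
  split_ifs <;> norm_num

lemma eq_of_forall_adj_of_cliqueFree (hD : D.skeleton.CliqueFree 3)
    (hSN : ↑S ⊆ insert j (D.skeleton.neighborSet j)) (hS : 3 ≤ #S) {i : V} (hiS : i ∈ S)
    (hi : ∀ k ∈ S, k ≠ i → D.adj k i) : i = j := by
  by_contra hij
  obtain ⟨m, hmS, hmj, hmi⟩ := exists_mem_ne_ne hS j i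
  exact SimpleGraph.isIndepSet_neighborSet_of_triangleFree _ hD j
    ((hSN hmS).resolve_left hmj) ((hSN hiS).resolve_left hij) hmi (Or.inl (hi m hmS hmi))

lemma imset_eq_one_iff_forall_adj (hD : D.skeleton.CliqueFree 3) (hjS : j ∈ S)
    (hSN : ↑S ⊆ insert j (D.skeleton.neighborSet j)) (hS : 3 ≤ #S) :
    D.imset S = 1 ↔ ∀ k ∈ S, k ≠ j → D.adj k j := by
  have hsink : (2 ≤ #S ∧ ∃ i ∈ S, ∀ k ∈ S, k ≠ i → D.adj k i) ↔
      ∀ k ∈ S, k ≠ j → D.adj k j := by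
    refine ⟨fun ⟨_, i, hiS, hi⟩ => ?_, fun h => ⟨by omega, j, hjS, h⟩⟩
    exact eq_of_forall_adj_of_cliqueFree hD hSN hS hiS hi ▸ hi
  by_cases h : ∀ k ∈ S, k ≠ j → D.adj k j <;> simp [imset, hsink, h]

lemma isVStructure_iff_of_cliqueFree (hD : D.skeleton.CliqueFree 3) {a b : V} :
    D.IsVStructure a j b ↔ a ≠ b ∧ D.adj a j ∧ D.adj b j := by
  refine ⟨fun h => ⟨h.1, h.2.1, h.2.2.1⟩, fun ⟨hab, haj, hbj⟩ => ⟨hab, haj, hbj, ?_⟩⟩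
  exact not_or.1 (SimpleGraph.isIndepSet_neighborSet_of_triangleFree _ hD j
    (Or.inr haj) (Or.inr hbj) hab)

end DAG

open DAG in
/-- **`Δ` detects v-structure differences.**  Let `D` and `E` (representing essential
graphs) have the same skeleton, a tree.  Then `j ∈ Δ(D,E)` iff `D` and `E` contain
different sets of v-structures centered at `j`. -/
theorem mem_deltaSet_iff_vstructures_differ {p : ℕ} (D E : DAG (Fin p))
    (hskel : D.skeleton = E.skeleton) (htree : D.skeleton.IsTree) (j : Fin p) :
    j ∈ deltaSet D E ↔ ∃ a b, ¬ (D.IsVStructure a j b ↔ E.IsVStructure a j b) := by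
  have hD : D.skeleton.CliqueFree 3 := htree.isAcyclic.cliqueFree le_rfl
  have hE : E.skeleton.CliqueFree 3 := hskel ▸ hD
  have hne : E.skeleton.neighborSet j = D.skeleton.neighborSet j := by rw [hskel]
  calc j ∈ deltaSet D E ↔ ∃ S : Finset (Fin p), j ∈ S ∧
        ↑S ⊆ insert j (D.skeleton.neighborSet j) ∧ 3 ≤ #S ∧
        ¬ ((∀ k ∈ S, k ≠ j → D.adj k j) ↔ ∀ k ∈ S, k ≠ j → E.adj k j) := by
        refine exists_congr fun S => and_congr_right fun hjS => and_congr_right fun hSN =>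
          and_congr_right fun hS => ?_
        rw [Ne, imset_eq_imset_iff, imset_eq_one_iff_forall_adj hD hjS hSN hS,
          imset_eq_one_iff_forall_adj hE hjS (hne ▸ hSN) hS]
    _ ↔ ∃ a b, ¬ ((a ≠ b ∧ D.adj a j ∧ D.adj b j) ↔ (a ≠ b ∧ E.adj a j ∧ E.adj b j)) :=
        exists_finset_not_iff_iff_exists_pair (fun _ h => Or.inr h)
          (fun _ h => hne.subset (Or.inr h)) (D.skeleton.notMem_neighborSet_self)
    _ ↔ _ := by simp only [isVStructure_iff_of_cliqueFree hD, isVStructure_iff_of_cliqueFree hE]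
end

section
/- Let P be a polytope and let v be a vertex of P. If there exist nonzero vectors u₁ and u₂ such that v + u₁, v + u₂, and v + u₁ + u₂ are all vertices of P, then conv(v, v + u₁ + u₂) is not an edge of P. -/
open Classical

/-!
If a linear functional `φ` is maximized over `P` exactly on `conv(v, v + u₁ + u₂)`, then
`φ (v + u₁) + φ (v + u₂) = φ v + φ (v + u₁ + u₂) = 2 φ v` forces `φ (v + u₁) = φ v`, so the
vertex `v + u₁` lies on that segment. An extreme point on a segment of `P` is one of its
endpoints, hence `u₁ = 0` or `u₂ = 0`.
-/

theorem square_not_edge_general {W : Type*} [AddCommGroup W] [Module ℝ W] (P : Set W)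
    (v u₁ u₂ : W) (hu₁ : u₁ ≠ 0) (hu₂ : u₂ ≠ 0)
    (hv : v ∈ P.extremePoints ℝ) (hv₁ : v + u₁ ∈ P.extremePoints ℝ)
    (hv₂ : v + u₂ ∈ P.extremePoints ℝ) (hv₁₂ : v + u₁ + u₂ ∈ P.extremePoints ℝ) :
    ¬ IsPolytopeEdge P v (v + u₁ + u₂) := by
  rintro ⟨-, φ, hmax, hface⟩
  have hφ₁₂ : φ (v + u₁ + u₂) = φ v := (hface _ hv₁₂.1).2 (right_mem_segment ℝ _ _)
  have hφ₁ : φ (v + u₁) = φ v := by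
    have h₁ := hmax _ hv₁.1
    have h₂ := hmax _ hv₂.1
    simp only [map_add] at hφ₁₂ h₁ h₂ ⊢
    linarith
  have hseg : v + u₁ ∈ segment ℝ v (v + u₁ + u₂) := (hface _ hv₁.1).1 hφ₁
  rcases (mem_extremePoints_iff_forall_segment.1 hv₁).2 _ hv.1 _ hv₁₂.1 hseg with h | h
  · exact hu₁ (by simpa using h)
  · exact hu₂ (by simpa using h)

/-- **Square lemma.**  Let `P` be a polytope and `v` a vertex (extreme point) of `P`.  If
there are nonzero vectors `u₁`, `u₂` such that `v + u₁`, `v + u₂` and `v + u₁ + u₂` are all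
vertices of `P`, then `conv(v, v + u₁ + u₂)` is not an edge of `P`. -/
theorem square_not_edge {W : Type*} [AddCommGroup W] [Module ℝ W] (P : Set W)
    (hP : ∃ t : Finset W, P = convexHull ℝ (t : Set W))
    (v u₁ u₂ : W) (hu₁ : u₁ ≠ 0) (hu₂ : u₂ ≠ 0)
    (hv : v ∈ P.extremePoints ℝ) (hv₁ : v + u₁ ∈ P.extremePoints ℝ)
    (hv₂ : v + u₂ ∈ P.extremePoints ℝ) (hv₁₂ : v + u₁ + u₂ ∈ P.extremePoints ℝ) :
    ¬ IsPolytopeEdge P v (v + u₁ + u₂) :=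
  square_not_edge_general P v u₁ u₂ hu₁ hu₂ hv hv₁ hv₂ hv₁₂
end

section
/- Let 𝒢 and ℋ be DAGs with the same skeleton G, where G is a tree, such that the set of edges on which 𝒢 and ℋ differ in orientation forms a subtree T of G, and such that Δ(𝒢,ℋ) ≠ ∅. For an internal node i of T with |T ∩ ch_𝒢(i)| = 1 write 𝔠_i for the unique element of T ∩ ch_𝒢(i), and with |T ∩ pa_𝒢(i)| = 1 write 𝔭_i for the unique element of T ∩ pa_𝒢(i). Then the essential graphs of 𝒢 and ℋ form an essential flip if and only if every internal node i of T satisfies the condition of its type: (I) |T∩pa_𝒢(i)| ≥ 2 and |T∩ch_𝒢(i)| ≥ 2: no condition; (II) |T∩pa_𝒢(i)| ≥ 2 and |T∩ch_𝒢(i)| = 0: no condition; (III) |T∩pa_𝒢(i)| = 0 and |T∩ch_𝒢(i)| ≥ 2: no condition; (IV) |T∩pa_𝒢(i)| ≥ 2 and |T∩ch_𝒢(i)| = 1: either |pa_𝒢(i) ∖ T| ≥ 1, or (if there exists a v-structure centered at 𝔠_i in 𝒢 then 𝔠_i has an essential parent in ℋ); (V) |T∩pa_𝒢(i)| = 1 and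 |T∩ch_𝒢(i)| ≥ 2: either |pa_𝒢(i) ∖ T| ≥ 1, or (if there exists a v-structure centered at 𝔭_i in ℋ then 𝔭_i has an essential parent in 𝒢); (VI) |T∩pa_𝒢(i)| = 1 and |T∩ch_𝒢(i)| = 1: if both connected components of T ∖ {i} contain nodes of Δ(𝒢,ℋ), then either |pa_𝒢(i) ∖ T| ≥ 1, or (𝔠_i has an essential parent in ℋ and 𝔭_i has an essential parent in 𝒢). -/
open Classical

/-- The minimal subtree of `G` spanned by a vertex set `A`: all vertices lying on a path
between two elements of `A`. -/
def treeSpan {V : Type} (G : SimpleGraph V) (A : Set V) : Set V :=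
  { v | ∃ a ∈ A, ∃ b ∈ A, ∃ w : G.Walk a b, w.IsPath ∧ v ∈ w.support }

/-- The pair `{D, E}` (of representatives of essential graphs with common tree skeleton) is
an *essential flip*: they are not Markov equivalent, and every edge of the minimal subtree
spanned by `Δ(D,E)` is essential in both essential graphs, with opposite orientations. -/
def EssentialFlip {V : Type} (D E : DAG V) : Prop :=
  ¬ MarkovEquiv D E ∧
  ∀ a b : V, a ∈ treeSpan D.skeleton (deltaSet D E) → b ∈ treeSpan D.skeleton (deltaSet D E) →
    D.skeleton.Adj a b →
    ((D.Essential a b ∧ E.Essential b a) ∨ (D.Essential b a ∧ E.Essential a b))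

/-- The parents of `i` in `D` lying in `T`. -/
noncomputable def paIn {V : Type} (D : DAG V) (T : Finset V) (i : V) : Finset V :=
  T.filter (fun j => D.adj j i)

/-- The children of `i` in `D` lying in `T`. -/
noncomputable def chIn {V : Type} (D : DAG V) (T : Finset V) (i : V) : Finset V :=
  T.filter (fun j => D.adj i j)

/-- There exists a node of `A` in the connected component of `x` of the subtree on `T`
with the node `i` removed. -/
def ReachesAvoiding {V : Type} (G : SimpleGraph V) (T : Finset V) (i x : V) (A : Set V) : Prop :=
  ∃ d ∈ A, ∃ w : G.Walk x d, ∀ v ∈ w.support, v ∈ T ∧ v ≠ i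

/-!
On a forest skeleton an arrow `a → b` is essential iff `b` descends from a collider, a node with
two parents: the arrows below a v-structure are forced one after another, and if `b` has no such
ancestor, the ancestors of `b` form a directed chain whose arrows can all be reversed without
changing any v-structure.

When `E` arises from `D` by reversing the edges of a subtree `T`, a node lies in `Δ(D, E)` iff it
lies in `T` and is a collider of `D` or of `E`. An essential flip makes every arrow of `span Δ`
essential in both graphs; at an internal node that is a collider of neither graph, this says that
its neighbour in `T` has an essential parent, which gives the conditions of types IV–VI.
Conversely, for an arrow `u → v` of `span Δ` both sides of the edge contain nodes of `Δ`;
walking towards them from `u` or `v` one meets a node of type V or VI whose condition supplies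
a collider above `u`.
-/

open Relation SimpleGraph

theorem Relation.ReflTransGen.total_of_unique_pred {α : Type*} {r : α → α → Prop}
    {b x y : α}
    (huniq : ∀ z, ReflTransGen r z b → ∀ u u', r u z → r u' z → u = u')
    (hx : ReflTransGen r x b) (hy : ReflTransGen r y b) :
    ReflTransGen r x y ∨ ReflTransGen r y x := by
  induction hx using ReflTransGen.head_induction_on with
  | refl => exact Or.inr hy
  | head hxx' hx' ih =>
    rcases ih with h | h
    · exact Or.inl (h.head hxx')
    · rcases h.cases_tail with rfl | ⟨m, hym, hmx'⟩
      · exact Or.inl (.single hxx')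
      · exact Or.inr (huniq _ hx' _ _ hmx' hxx' ▸ hym)

theorem Finset.eq_singleton_of_card_le_one {α : Type*} {s : Finset α} {x : α} (hs : s.card ≤ 1)
    (hx : x ∈ s) : s = {x} :=
  Finset.eq_singleton_iff_unique_mem.mpr ⟨hx, fun y hy => Finset.card_le_one.mp hs y hy x hx⟩

namespace SimpleGraph

variable {V : Type} {G : SimpleGraph V}

theorem IsAcyclic.not_adj_of_adj_of_adj (hG : G.IsAcyclic) {a b c : V} (hac : G.Adj a c)
    (hbc : G.Adj b c) (hab : a ≠ b) : ¬ G.Adj a b := fun h =>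
  hG.cliqueFree le_rfl {a, b, c} <| by
    rw [isNClique_iff, Finset.card_eq_three.mpr ⟨a, b, c, hab, hac.ne, hbc.ne, rfl⟩]
    refine ⟨?_, rfl⟩
    simp [isClique_iff, Set.Pairwise, *, h.symm, hac.symm, hbc.symm]

theorem IsAcyclic.exists_isPath_of_transGen (hG : G.IsAcyclic) {r : V → V → Prop}
    (hr : ∀ a b, r a b → G.Adj a b) (hanti : ∀ a b, r a b → ¬ r b a) {a b : V}
    (h : TransGen r a b) : ∃ p : G.Walk a b, p.IsPath ∧ r p.penultimate b := by
  induction h with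
  | single hab =>
    exact ⟨Walk.nil.concat (hr _ _ hab), Walk.IsPath.nil.concat (by simpa using (hr _ _ hab).ne')
      (hr _ _ hab), by simpa [Walk.penultimate_concat]⟩
  | tail _ hbc ih =>
    obtain ⟨p, hp, hpen⟩ := ih
    have hc : _ ∉ p.support := fun hc =>
      hanti _ _ hbc (hG.eq_penultimate_of_adj_end hp (hr _ _ hbc) hc ▸ hpen)
    exact ⟨p.concat (hr _ _ hbc), hp.concat hc _, by simpa [Walk.penultimate_concat]⟩

theorem IsAcyclic.not_transGen_self (hG : G.IsAcyclic) {r : V → V → Prop}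
    (hr : ∀ a b, r a b → G.Adj a b) (hanti : ∀ a b, r a b → ¬ r b a) (v : V) :
    ¬ TransGen r v v := fun h => by
  obtain ⟨p, hp, hpen⟩ := hG.exists_isPath_of_transGen hr hanti h
  rw [Walk.isPath_iff_nil.mp hp |>.eq_nil, Walk.penultimate_nil] at hpen
  exact (hr v v hpen).ne rfl

theorem IsAcyclic.support_subset_of_isPath (hG : G.IsAcyclic) {T : Set V}
    (hT : (G.induce T).Connected) {x y : V} (hx : x ∈ T) (hy : y ∈ T) {w : G.Walk x y}
    (hw : w.IsPath) : ∀ v ∈ w.support, v ∈ T := by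
  classical
  let w' : G.Walk x y :=
    (hT.preconnected ⟨x, hx⟩ ⟨y, hy⟩).some.map (Embedding.induce T).toHom
  have hw' : w = w'.bypass := congrArg Subtype.val <|
    (hG.subsingleton_path x y).elim ⟨w, hw⟩ ⟨w'.bypass, w'.bypass_isPath⟩
  intro v hv
  obtain ⟨u, -, rfl⟩ := List.mem_map.mp <| (Walk.support_map _ _).symm ▸
    w'.support_bypass_subset_support (hw' ▸ hv)
  exact u.2

theorem IsAcyclic.mem_support_of_adj_of_adj (hG : G.IsAcyclic) {q i c : V} (hqi : G.Adj q i)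
    (hic : G.Adj i c) (hqc : q ≠ c) (w : G.Walk q c) : i ∈ w.support := by
  classical
  exact w.support_bypass_subset_support <|
    hG.mem_support_of_ne_mem_support_of_adj_of_isPath w.bypass_isPath (Path.singleton hqi).2
      hic.symm (by simp [hqc.symm, hic.ne'])

theorem IsAcyclic.exists_isPath_of_adj_of_adj (hG : G.IsAcyclic) {q i c d₁ d₂ : V}
    (hqi : G.Adj q i) (hic : G.Adj i c) (hqc : q ≠ c)
    {p₁ : G.Walk q d₁} (hp₁ : p₁.IsPath) (hi₁ : i ∉ p₁.support)
    {p₂ : G.Walk c d₂} (hp₂ : p₂.IsPath) (hi₂ : i ∉ p₂.support) :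
    ∃ w : G.Walk d₁ d₂, w.IsPath ∧ q ∈ w.support ∧ i ∈ w.support ∧
      c ∈ w.support := by
  classical
  have hdisj : ∀ x ∈ p₁.support, x ∉ p₂.support := fun x hx₁ hx₂ => by
    have := hG.mem_support_of_adj_of_adj hqi hic hqc
      ((p₁.takeUntil x hx₁).append (p₂.takeUntil x hx₂).reverse)
    rw [Walk.mem_support_append_iff, Walk.support_reverse, List.mem_reverse] at this
    exact this.elim (fun h => hi₁ (p₁.support_takeUntil_subset_support hx₁ h))
      (fun h => hi₂ (p₂.support_takeUntil_subset_support hx₂ h))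
  refine ⟨p₁.reverse.append (.cons hqi (.cons hic p₂)), .mk' ?_, by simp, by simp, by simp⟩
  simp only [Walk.support_append, Walk.support_reverse, Walk.support_cons, List.tail_cons,
    List.nodup_append, List.nodup_reverse, List.nodup_cons, List.mem_reverse, List.mem_cons]
  refine ⟨hp₁.support_nodup, ⟨hi₂, hp₂.support_nodup⟩, ?_⟩
  rintro x hx _ (rfl | hy) rfl
  exacts [hi₁ hx, hdisj x hx hy]

end SimpleGraph

namespace DAG

variable {V : Type} (D : DAG V)

def IsCollider (z : V) : Prop :=
  ∃ x y, x ≠ y ∧ D.adj x z ∧ D.adj y z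

def DescendsFromCollider (b : V) : Prop :=
  ∃ z, D.IsCollider z ∧ ReflTransGen D.adj z b

def reverseInto (hD : D.skeleton.IsAcyclic) (S : Set V) : DAG V where
  adj x y := (D.adj x y ∧ y ∉ S) ∨ (D.adj y x ∧ x ∈ S)
  acyclic := hD.not_transGen_self
    (by rintro a b (⟨h, -⟩ | ⟨h, -⟩) <;> [exact Or.inl h; exact Or.inr h])
    (by rintro a b (⟨h, hb⟩ | ⟨h, ha⟩) (⟨h', ha'⟩ | ⟨h', hb'⟩)
        exacts [D.acyclic a (.tail (.single h) h'), hb hb', ha' ha,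
          D.acyclic a (.tail (.single h') h)])

variable {D}

theorem asymm {a b : V} (h : D.adj a b) : ¬ D.adj b a := fun h' =>
  D.acyclic a (.tail (.single h) h')

theorem skeleton_adj {a b : V} (h : D.adj a b) : D.skeleton.Adj a b := Or.inl h

theorem DescendsFromCollider.of_adj {a b : V} (ha : D.DescendsFromCollider a) (hab : D.adj a b) :
    D.DescendsFromCollider b :=
  let ⟨z, hz, hza⟩ := ha; ⟨z, hz, hza.tail hab⟩

theorem DescendsFromCollider.of_adj_of_not_isCollider {a b : V} (hb : D.DescendsFromCollider b)
    (hab : D.adj a b) (hnb : ¬ D.IsCollider b) : D.DescendsFromCollider a := by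
  obtain ⟨z, hz, hzb⟩ := hb
  rcases hzb.cases_tail with rfl | ⟨m, hzm, hmb⟩
  · exact absurd hz hnb
  · by_cases hma : m = a
    · exact ⟨z, hz, hma ▸ hzm⟩
    · exact absurd ⟨m, a, hma, hmb, hab⟩ hnb

section Forest

variable (hD : D.skeleton.IsAcyclic)
include hD

theorem isVStructure_of_adj {x y z : V} (hx : D.adj x z) (hy : D.adj y z) (hxy : x ≠ y) :
    D.IsVStructure x z y :=
  have hxy' := hD.not_adj_of_adj_of_adj (skeleton_adj hx) (skeleton_adj hy) hxy
  ⟨hxy, hx, hy, fun h => hxy' (Or.inl h), fun h => hxy' (Or.inr h)⟩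

theorem isCollider_iff_exists_isVStructure {z : V} :
    D.IsCollider z ↔ ∃ x y, D.IsVStructure x z y :=
  ⟨fun ⟨x, y, hxy, hx, hy⟩ => ⟨x, y, isVStructure_of_adj hD hx hy hxy⟩,
    fun ⟨x, y, hxy, hx, hy, _⟩ => ⟨x, y, hxy, hx, hy⟩⟩

theorem essential_of_isCollider {a b : V} (hab : D.adj a b) (hb : D.IsCollider b) :
    D.Essential a b := by
  obtain ⟨c, hcb, hca⟩ : ∃ c, D.adj c b ∧ c ≠ a := by
    obtain ⟨x, y, hxy, hx, hy⟩ := hb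
    by_cases hxa : x = a
    · exact ⟨y, hy, fun h => hxy (hxa.trans h.symm)⟩
    · exact ⟨x, hx, hxa⟩
  exact ⟨hab, fun E hE => ((hE.2 c b a).mp (isVStructure_of_adj hD hcb hab hca)).2.2.1⟩

/-- Reversing `w → b` would create the v-structure `p → w ← b`. -/
theorem essential_of_essential_of_adj {p w b : V} (hpw : D.Essential p w) (hwb : D.adj w b) :
    D.Essential w b := by
  refine ⟨hwb, fun E hE => ?_⟩
  have hwb' : E.skeleton.Adj w b := hE.1 ▸ skeleton_adj hwb
  refine hwb'.resolve_right fun hbw => D.asymm hwb ?_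
  have hpb : p ≠ b := fun h => D.asymm hwb (h ▸ hpw.1)
  have hv : E.IsVStructure p w b := by
    refine ⟨hpb, hpw.2 E hE, hbw, fun h => ?_, fun h => ?_⟩ <;>
      exact hD.not_adj_of_adj_of_adj (skeleton_adj hpw.1) (skeleton_adj hwb).symm hpb
        (hE.1 ▸ by first | exact Or.inl h | exact Or.inr h)
  exact ((hE.2 p w b).mpr hv).2.2.1

theorem essential_of_reflTransGen {z w b : V} (hz : D.IsCollider z)
    (hzw : ReflTransGen D.adj z w) (hwb : D.adj w b) : D.Essential w b := by
  induction hzw generalizing b with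
  | refl =>
    have ⟨x, _, _, hx, _⟩ := hz
    exact essential_of_essential_of_adj hD (essential_of_isCollider hD hx hz) hwb
  | tail _ hmw ih => exact essential_of_essential_of_adj hD (ih hmw) hwb

theorem essential_of_descendsFromCollider {a b : V} (hab : D.adj a b)
    (hb : D.DescendsFromCollider b) : D.Essential a b := by
  obtain ⟨z, hz, hzb⟩ := hb
  rcases hzb.cases_tail with rfl | ⟨m, hzm, hmb⟩
  · exact essential_of_isCollider hD hab hz
  · by_cases hma : m = a
    · exact essential_of_reflTransGen hD hz (hma ▸ hzm) hab
    · exact essential_of_isCollider hD hab ⟨m, a, hma, hmb, hab⟩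

theorem skeleton_reverseInto (S : Set V) : (D.reverseInto hD S).skeleton = D.skeleton := by
  ext x y
  change ((D.adj x y ∧ y ∉ S) ∨ (D.adj y x ∧ x ∈ S)) ∨
      ((D.adj y x ∧ x ∉ S) ∨ (D.adj x y ∧ y ∈ S)) ↔ D.adj x y ∨ D.adj y x
  by_cases x ∈ S <;> by_cases y ∈ S <;> tauto

/-- No v-structure is centred in `S`, before or after the reversal. -/
theorem markovEquiv_reverseInto (S : Set V) (hclosed : ∀ x y, D.adj x y → y ∈ S → x ∈ S)
    (hpar : ∀ y ∈ S, ∀ x x', D.adj x y → D.adj x' y → x = x')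
    (hch : ∀ j x x', D.adj j x → D.adj j x' → x ∈ S → x' ∈ S → x = x') :
    MarkovEquiv D (D.reverseInto hD S) := by
  refine ⟨(skeleton_reverseInto hD S).symm, fun i j k => ?_⟩
  by_cases hj : j ∈ S
  · refine iff_of_false (fun ⟨hik, hi, hk, _⟩ => hik (hpar j hj i k hi hk)) ?_
    rintro ⟨hik, (⟨-, hj'⟩ | ⟨hi, hiS⟩), (⟨-, hj''⟩ | ⟨hk, hkS⟩), -⟩
    exacts [hj' hj, hj' hj, hj'' hj, hik (hch j i k hi hk hiS hkS)]
  · have hpa : ∀ x, (D.reverseInto hD S).adj x j ↔ D.adj x j := fun x =>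
      ⟨by rintro (⟨h, -⟩ | ⟨h, hx⟩); exacts [h, absurd (hclosed j x h hx) hj],
        fun h => Or.inl ⟨h, hj⟩⟩
    have hsk := congrArg (fun G : SimpleGraph V => ¬ G.Adj i k) (skeleton_reverseInto hD S)
    simp only [DAG.skeleton, not_or] at hsk
    simp only [IsVStructure, hpa, ← hsk]

/-- Without a collider above `b`, the ancestors of `b` form a directed chain; reversing the
arrows into it keeps all v-structures and reverses every arrow into `b`. -/
theorem descendsFromCollider_of_essential {a b : V} (h : D.Essential a b) :
    D.DescendsFromCollider b := by
  by_contra hb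
  let S : Set V := {x | ReflTransGen D.adj x b}
  have hpar : ∀ y ∈ S, ∀ x x', D.adj x y → D.adj x' y → x = x' := fun y hy x x' hx hx' =>
    by_contra fun hne => hb ⟨y, ⟨x, x', hne, hx, hx'⟩, hy⟩
  have hch_of_le : ∀ j x x', D.adj j x → D.adj j x' → x' ∈ S → ReflTransGen D.adj x x' →
      x = x' := by
    intro j x x' hx hx' hx'S hxx'
    rcases hxx'.cases_tail with rfl | ⟨m, hxm, hmx'⟩
    · rfl
    · exact absurd (TransGen.head' hx (hpar x' hx'S m j hmx' hx' ▸ hxm)) (D.acyclic j)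
  have hch : ∀ j x x', D.adj j x → D.adj j x' → x ∈ S → x' ∈ S → x = x' := by
    intro j x x' hx hx' hxS hx'S
    rcases ReflTransGen.total_of_unique_pred hpar hxS hx'S with hxx' | hx'x
    exacts [hch_of_le j x x' hx hx' hx'S hxx', (hch_of_le j x' x hx' hx hxS hx'x).symm]
  have hE := markovEquiv_reverseInto hD S (fun x y hxy hy => hy.head hxy) hpar hch
  exact D.asymm h.1 ((h.2 _ hE).resolve_left fun h' => h'.2 ReflTransGen.refl).1

theorem essential_iff {a b : V} : D.Essential a b ↔ D.adj a b ∧ D.DescendsFromCollider b :=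
  ⟨fun h => ⟨h.1, descendsFromCollider_of_essential hD h⟩,
    fun h => essential_of_descendsFromCollider hD h.1 h.2⟩

theorem exists_essential_iff {b : V} : (∃ a, D.Essential a b) ↔ D.DescendsFromCollider b := by
  refine ⟨fun ⟨a, h⟩ => descendsFromCollider_of_essential hD h, fun hb => ?_⟩
  obtain ⟨z, hz, hzb⟩ := id hb
  rcases hzb.cases_tail with rfl | ⟨m, -, hmb⟩
  · obtain ⟨x, -, -, hx, -⟩ := hz
    exact ⟨x, essential_of_descendsFromCollider hD hx hb⟩
  · exact ⟨m, essential_of_descendsFromCollider hD hmb hb⟩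

theorem exists_essential_of_essential_of_not_isCollider {c i : V} (hci : D.Essential c i)
    (hi : ¬ D.IsCollider i) : ∃ y, D.Essential y c :=
  (exists_essential_iff hD).mpr (((essential_iff hD).mp hci).2.of_adj_of_not_isCollider hci.1 hi)

end Forest

end DAG

section DeltaSet

variable {V : Type} {D E : DAG V}

theorem deltaSet_comm (hDE : D.skeleton = E.skeleton) : deltaSet E D = deltaSet D E := by
  ext i
  constructor <;> rintro ⟨S, hi, hS, h3, hne⟩
  exacts [⟨S, hi, hDE ▸ hS, h3, hne.symm⟩, ⟨S, hi, hDE ▸ hS, h3, hne.symm⟩]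

theorem DAG.imset_eq_one_or_eq_zero (S : Finset V) : D.imset S = 1 ∨ D.imset S = 0 := by
  unfold DAG.imset; split_ifs <;> simp

/-- The sink of a star around `i` is `i`: two leaves of a star are not adjacent in a forest. -/
theorem DAG.imset_eq_one_iff_s9 (hD : D.skeleton.IsAcyclic) {i : V} {S : Finset V} (hi : i ∈ S)
    (hS : (↑S : Set V) ⊆ insert i (D.skeleton.neighborSet i)) (h3 : 3 ≤ S.card) :
    D.imset S = 1 ↔ ∀ y ∈ S, y ≠ i → D.adj y i := by
  have hnbr : ∀ y ∈ S, y ≠ i → D.skeleton.Adj i y := fun y hy hyi =>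
    (hS hy).resolve_left hyi
  simp only [DAG.imset, ite_eq_left_iff, zero_ne_one, imp_false, not_not]
  refine ⟨fun ⟨_, x, hx, hsink⟩ => ?_, fun h => ⟨by omega, i, hi, h⟩⟩
  by_cases hxi : x = i
  · exact hxi ▸ hsink
  obtain ⟨z, hz⟩ : ((S.erase i).erase x).Nonempty := by
    rw [← Finset.card_pos, Finset.card_erase_of_mem (by simp [hx, hxi]),
      Finset.card_erase_of_mem hi]
    omega
  simp only [Finset.mem_erase] at hz
  exact absurd (DAG.skeleton_adj (hsink z hz.2.2 hz.1)) <|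
    hD.not_adj_of_adj_of_adj (hnbr z hz.2.2 hz.2.1).symm (hnbr x hx hxi).symm hz.1

theorem mem_deltaSet_of_adj_of_adj (hD : D.skeleton.IsAcyclic) (hDE : D.skeleton = E.skeleton)
    {i j k : V} (hj : D.adj j i) (hk : D.adj k i) (hjk : j ≠ k)
    (hE : ¬ (E.adj j i ∧ E.adj k i)) :
    i ∈ deltaSet D E := by
  have hS : (↑({i, j, k} : Finset V) : Set V) ⊆ insert i (D.skeleton.neighborSet i) := by
    simp [Set.insert_subset_iff, (DAG.skeleton_adj hj).symm, (DAG.skeleton_adj hk).symm]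
  have h3 : 3 ≤ ({i, j, k} : Finset V).card := by
    rw [Finset.card_eq_three.mpr
      ⟨i, j, k, (DAG.skeleton_adj hj).ne', (DAG.skeleton_adj hk).ne', hjk, rfl⟩]
  refine ⟨{i, j, k}, by simp, hS, h3, ?_⟩
  rw [(DAG.imset_eq_one_iff_s9 hD (by simp) hS h3).mpr (by simp [hj, hk]), ne_comm, Ne,
    DAG.imset_eq_one_iff_s9 (hDE ▸ hD) (by simp) (hDE ▸ hS) h3]
  simpa [hjk.symm, (DAG.skeleton_adj hj).ne, (DAG.skeleton_adj hk).ne] using hE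

theorem mem_deltaSet_of_isCollider (hD : D.skeleton.IsAcyclic) (hDE : D.skeleton = E.skeleton)
    {i x : V} (hx : ¬ (D.adj x i ↔ E.adj x i)) (hc : D.IsCollider i) : i ∈ deltaSet D E := by
  obtain ⟨a, b, hab, ha, hb⟩ := hc
  by_cases hE : E.adj a i ∧ E.adj b i
  · by_cases hxD : D.adj x i
    · have hxa : x ≠ a := fun h => hx ⟨fun _ => h ▸ hE.1, fun _ => hxD⟩
      exact mem_deltaSet_of_adj_of_adj hD hDE hxD ha hxa
        fun h => hx ⟨fun _ => h.1, fun _ => hxD⟩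
    · have hxE : E.adj x i := by tauto
      have hxa : x ≠ a := fun h => hxD (h ▸ ha)
      rw [← deltaSet_comm hDE]
      exact mem_deltaSet_of_adj_of_adj (hDE ▸ hD) hDE.symm hxE hE.1 hxa fun h => hxD h.1
  · exact mem_deltaSet_of_adj_of_adj hD hDE ha hb hab hE

theorem exists_not_adj_iff_and_isCollider_of_imset (hD : D.skeleton.IsAcyclic)
    (hDE : D.skeleton = E.skeleton) {i : V} {S : Finset V}
    (hi : i ∈ S) (hS : (↑S : Set V) ⊆ insert i (D.skeleton.neighborSet i)) (h3 : 3 ≤ S.card)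
    (hDS : D.imset S = 1) (hES : ¬ E.imset S = 1) :
    (∃ x, ¬ (D.adj x i ↔ E.adj x i)) ∧ D.IsCollider i := by
  rw [DAG.imset_eq_one_iff_s9 hD hi hS h3] at hDS
  obtain ⟨y, hy, hyi, hEy⟩ : ∃ y ∈ S, y ≠ i ∧ ¬ E.adj y i := by
    by_contra! h
    exact hES ((DAG.imset_eq_one_iff_s9 (hDE ▸ hD) hi (hDE ▸ hS) h3).mpr h)
  obtain ⟨a, ha, b, hb, hab⟩ := Finset.one_lt_card.mp
    (show 1 < (S.erase i).card by rw [Finset.card_erase_of_mem hi]; omega)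
  simp only [Finset.mem_erase] at ha hb
  exact ⟨⟨y, fun h => hEy (h.mp (hDS y hy hyi))⟩,
    a, b, hab, hDS a ha.2 ha.1, hDS b hb.2 hb.1⟩

theorem mem_deltaSet_iff (hD : D.skeleton.IsAcyclic) (hDE : D.skeleton = E.skeleton) {i : V} :
    i ∈ deltaSet D E ↔
      (∃ x, ¬ (D.adj x i ↔ E.adj x i)) ∧ (D.IsCollider i ∨ E.IsCollider i) := by
  constructor
  · rintro ⟨S, hi, hS, h3, hne⟩
    rcases D.imset_eq_one_or_eq_zero S with hDS | hDS <;>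
      rcases E.imset_eq_one_or_eq_zero S with hES | hES
    · exact absurd (hDS.trans hES.symm) hne
    · obtain ⟨hx, hc⟩ :=
        exists_not_adj_iff_and_isCollider_of_imset hD hDE hi hS h3 hDS (by simp [hES])
      exact ⟨hx, Or.inl hc⟩
    · obtain ⟨⟨x, hx⟩, hc⟩ :=
        exists_not_adj_iff_and_isCollider_of_imset (hDE ▸ hD) hDE.symm hi (hDE ▸ hS) h3 hES
          (by simp [hDS])
      exact ⟨⟨x, fun h => hx h.symm⟩, Or.inr hc⟩
    · exact absurd (hDS.trans hES.symm) hne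
  · rintro ⟨⟨x, hx⟩, hc | hc⟩
    · exact mem_deltaSet_of_isCollider hD hDE hx hc
    · rw [← deltaSet_comm hDE]
      exact mem_deltaSet_of_isCollider (hDE ▸ hD) hDE.symm (fun h => hx h.symm) hc

end DeltaSet

section MarkovEquiv

variable {V : Type} {D E : DAG V}

theorem MarkovEquiv.symm (h : MarkovEquiv D E) : MarkovEquiv E D :=
  ⟨h.1.symm, fun i j k => (h.2 i j k).symm⟩

theorem MarkovEquiv.adj_iff_of_isCollider (h : MarkovEquiv D E) (hD : D.skeleton.IsAcyclic)
    {i : V} (hi : D.IsCollider i) (x : V) : D.adj x i ↔ E.adj x i := by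
  obtain ⟨a, b, hab, ha, hb⟩ := hi
  have hEpar : ∀ y, D.adj y i → E.adj y i := fun y hy => by
    obtain ⟨c, hc, hcy⟩ : ∃ c, D.adj c i ∧ c ≠ y := by
      by_cases hay : a = y
      exacts [⟨b, hb, fun h => hab (hay.trans h.symm)⟩, ⟨a, ha, hay⟩]
    exact ((h.2 y i c).mp (DAG.isVStructure_of_adj hD hy hc hcy.symm)).2.1
  refine ⟨hEpar x, fun hx => by_contra fun hxD => ?_⟩
  have hxa : x ≠ a := fun h => hxD (h ▸ ha)
  exact hxD ((h.2 x i a).mpr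
    (DAG.isVStructure_of_adj (h.1 ▸ hD) hx (hEpar a ha) hxa)).2.1

theorem not_markovEquiv_of_mem_deltaSet (hD : D.skeleton.IsAcyclic)
    (hDE : D.skeleton = E.skeleton) {i : V} (hi : i ∈ deltaSet D E) : ¬ MarkovEquiv D E := by
  intro h
  obtain ⟨⟨x, hx⟩, hc | hc⟩ := (mem_deltaSet_iff hD hDE).mp hi
  · exact hx (h.adj_iff_of_isCollider hD hc x)
  · exact hx (h.symm.adj_iff_of_isCollider (hDE ▸ hD) hc x).symm

end MarkovEquiv

section TreeSpan

variable {V : Type} {G : SimpleGraph V} {T : Finset V} {A : Set V}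

theorem mem_treeSpan_of_mem {d : V} (hd : d ∈ A) : d ∈ treeSpan G A :=
  ⟨d, hd, d, hd, .nil, .nil, by simp⟩

theorem treeSpan_subset (hG : G.IsAcyclic) (hT : (G.induce (T : Set V)).Connected)
    (hA : A ⊆ T) : treeSpan G A ⊆ T := fun _ ⟨_, ha, _, hb, _, hw, hv⟩ =>
  hG.support_subset_of_isPath hT (hA ha) (hA hb) hw _ hv

/-- Follow the path through `a` between two nodes of `A` in the direction away from `b`. -/
theorem reachesAvoiding_of_mem_treeSpan (hG : G.IsAcyclic) (hT : (G.induce (T : Set V)).Connected)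
    (hA : A ⊆ T) {a b : V} (ha : a ∈ treeSpan G A) (hba : b ≠ a) :
    ReachesAvoiding G T b a A := by
  classical
  obtain ⟨d₁, hd₁, d₂, hd₂, w, hw, hmem⟩ := ha
  have hwT := hG.support_subset_of_isPath hT (hA hd₁) (hA hd₂) hw
  by_cases hb : b ∈ (w.takeUntil a hmem).support
  · refine ⟨d₂, hd₂, w.dropUntil a hmem, fun v hv =>
      ⟨hwT v (w.support_dropUntil_subset_support hmem hv), ?_⟩⟩
    rintro rfl
    exact Walk.IsPath.ne_of_mem_support_of_append ((w.take_spec hmem).symm ▸ hw) hba hb hv rfl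
  · refine ⟨d₁, hd₁, (w.takeUntil a hmem).reverse, fun v hv => ?_⟩
    rw [Walk.support_reverse, List.mem_reverse] at hv
    exact ⟨hwT v (w.support_takeUntil_subset_support hmem hv), fun h => hb (h ▸ hv)⟩

theorem ReachesAvoiding.exists_isPath {i x : V} (h : ReachesAvoiding G T i x A) :
    ∃ d ∈ A, ∃ w : G.Walk x d, w.IsPath ∧ i ∉ w.support := by
  classical
  obtain ⟨d, hd, w, hw⟩ := h
  exact ⟨d, hd, w.bypass, w.bypass_isPath,
    fun hi => (hw i (w.support_bypass_subset_support hi)).2 rfl⟩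

theorem ReachesAvoiding.exists_adj {i x : V} (h : ReachesAvoiding G T i x A) (hx : x ∉ A) :
    ∃ t ∈ T, G.Adj x t ∧ t ≠ i ∧ ReachesAvoiding G T x t A := by
  classical
  obtain ⟨d, hd, w, hw⟩ := h
  have hwT : ∀ v ∈ w.bypass.support, v ∈ T ∧ v ≠ i := fun v hv =>
    hw v (w.support_bypass_subset_support hv)
  obtain ⟨t, hxt, q, hq⟩ := Walk.exists_eq_cons_of_ne (fun h : x = d => hx (h ▸ hd)) w.bypass
  have hpath := w.bypass_isPath
  rw [hq, Walk.cons_isPath_iff] at hpath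
  rw [hq] at hwT
  obtain ⟨htT, hti⟩ := hwT t (by simp)
  exact ⟨t, htT, hxt, hti, d, hd, q, fun v hv =>
    ⟨(hwT v (by simp [hv])).1, fun h => hpath.2 (h ▸ hv)⟩⟩

theorem mem_treeSpan_of_reachesAvoiding (hG : G.IsAcyclic) {q i c : V} (hqi : G.Adj q i)
    (hic : G.Adj i c) (hqc : q ≠ c) (hq : ReachesAvoiding G T i q A)
    (hc : ReachesAvoiding G T i c A) :
    q ∈ treeSpan G A ∧ i ∈ treeSpan G A ∧ c ∈ treeSpan G A := by
  obtain ⟨d₁, hd₁, p₁, hp₁, hi₁⟩ := hq.exists_isPath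
  obtain ⟨d₂, hd₂, p₂, hp₂, hi₂⟩ := hc.exists_isPath
  obtain ⟨w, hw, hqw, hiw, hcw⟩ :=
    hG.exists_isPath_of_adj_of_adj hqi hic hqc hp₁ hi₁ hp₂ hi₂
  exact ⟨⟨d₁, hd₁, d₂, hd₂, w, hw, hqw⟩, ⟨d₁, hd₁, d₂, hd₂, w, hw, hiw⟩,
    ⟨d₁, hd₁, d₂, hd₂, w, hw, hcw⟩⟩

end TreeSpan

section SubtreeReversal

variable {V : Type} {G : SimpleGraph V} {D E : DAG V} {T : Finset V} {i : V}

structure IsSubtreeReversal (G : SimpleGraph V) (D E : DAG V) (T : Finset V) : Prop where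
  acyclic : G.IsAcyclic
  skeleton_left : D.skeleton = G
  skeleton_right : E.skeleton = G
  two_le_card : 2 ≤ T.card
  connected : (G.induce (T : Set V)).Connected
  not_adj_iff_iff : ∀ a b, G.Adj a b → (¬ (D.adj a b ↔ E.adj a b) ↔ (a ∈ T ∧ b ∈ T))

theorem mem_paIn {x : V} : x ∈ paIn D T i ↔ x ∈ T ∧ D.adj x i := Finset.mem_filter

theorem mem_chIn {x : V} : x ∈ chIn D T i ↔ x ∈ T ∧ D.adj i x := Finset.mem_filter

theorem DAG.isCollider_of_one_lt_card_paIn (h : 1 < (paIn D T i).card) : D.IsCollider i := by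
  obtain ⟨x, hx, y, hy, hxy⟩ := Finset.one_lt_card.mp h
  exact ⟨x, y, hxy, (mem_paIn.mp hx).2, (mem_paIn.mp hy).2⟩

theorem DAG.isCollider_iff_one_lt_card_paIn (hO : ∀ q, D.adj q i → q ∈ T) :
    D.IsCollider i ↔ 1 < (paIn D T i).card :=
  ⟨fun ⟨x, y, hxy, hx, hy⟩ => Finset.one_lt_card.mpr
    ⟨x, mem_paIn.mpr ⟨hO x hx, hx⟩, y, mem_paIn.mpr ⟨hO y hy, hy⟩, hxy⟩,
    DAG.isCollider_of_one_lt_card_paIn⟩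

theorem two_le_card_filter_adj {x y : V} (hx : x ∈ T) (hy : y ∈ T) (hix : G.Adj i x)
    (hiy : G.Adj i y) (hxy : x ≠ y) : 2 ≤ (T.filter (fun j => G.Adj i j)).card :=
  Finset.one_lt_card.mpr ⟨x, Finset.mem_filter.mpr ⟨hx, hix⟩, y,
    Finset.mem_filter.mpr ⟨hy, hiy⟩, hxy⟩

theorem card_chIn_le_card_filter_adj (hD : D.skeleton = G) (i : V) :
    (chIn D T i).card ≤ (T.filter (fun j => G.Adj i j)).card :=
  Finset.card_le_card fun _ hx => Finset.mem_filter.mpr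
    ⟨(mem_chIn.mp hx).1, hD ▸ DAG.skeleton_adj (mem_chIn.mp hx).2⟩

namespace IsSubtreeReversal

variable (h : IsSubtreeReversal G D E T)
include h

theorem symm : IsSubtreeReversal G E D T :=
  ⟨h.acyclic, h.skeleton_right, h.skeleton_left, h.two_le_card, h.connected,
    fun a b hab => by rw [← h.not_adj_iff_iff a b hab, iff_comm (a := E.adj a b)]⟩

theorem skeleton_eq : D.skeleton = E.skeleton := h.skeleton_left.trans h.skeleton_right.symm

theorem skeleton_acyclic : D.skeleton.IsAcyclic := h.skeleton_left ▸ h.acyclic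

theorem adj_iff {x y : V} (hxy : ¬ (x ∈ T ∧ y ∈ T)) : D.adj x y ↔ E.adj x y := by
  by_cases hG : G.Adj x y
  · exact not_not.mp fun hne => hxy ((h.not_adj_iff_iff x y hG).mp hne)
  · exact iff_of_false (fun h' => hG (h.skeleton_left ▸ DAG.skeleton_adj h'))
      (fun h' => hG (h.skeleton_right ▸ DAG.skeleton_adj h'))

theorem adj_swap {x y : V} (hx : x ∈ T) (hy : y ∈ T) (hxy : D.adj x y) : E.adj y x := by
  have hG : G.Adj x y := h.skeleton_left ▸ DAG.skeleton_adj hxy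
  have hE : E.skeleton.Adj x y := h.skeleton_right ▸ hG
  exact hE.resolve_left fun h' => (h.not_adj_iff_iff x y hG).mpr ⟨hx, hy⟩ (iff_of_true hxy h')

theorem adj_right_iff (hi : i ∈ T) {x : V} :
    E.adj x i ↔ (D.adj x i ∧ x ∉ T) ∨ (D.adj i x ∧ x ∈ T) := by
  by_cases hx : x ∈ T
  · refine ⟨fun hxi => Or.inr ⟨h.symm.adj_swap hx hi hxi, hx⟩, ?_⟩
    rintro (⟨-, hx'⟩ | ⟨hix, -⟩)
    exacts [absurd hx hx', h.adj_swap hi hx hix]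
  · simp only [hx, ← h.adj_iff (fun hxi => hx hxi.1), not_false_eq_true, and_true, and_false,
      or_false]

theorem paIn_right (hi : i ∈ T) : paIn E T i = chIn D T i := by
  ext x
  simp only [mem_paIn, mem_chIn, h.adj_right_iff hi]
  tauto

theorem exists_outside_parent_right_iff :
    (∃ q, E.adj q i ∧ q ∉ T) ↔ (∃ q, D.adj q i ∧ q ∉ T) :=
  exists_congr fun _ => ⟨fun ⟨hq, hqT⟩ => ⟨(h.adj_iff (fun hq => hqT hq.1)).mpr hq, hqT⟩,
    fun ⟨hq, hqT⟩ => ⟨(h.adj_iff (fun hq => hqT hq.1)).mp hq, hqT⟩⟩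

theorem isCollider_right_iff (hi : i ∈ T) (hO : ∀ q, D.adj q i → q ∈ T) :
    E.IsCollider i ↔ 1 < (chIn D T i).card := by
  rw [← h.paIn_right hi]
  refine DAG.isCollider_iff_one_lt_card_paIn fun q hq => by_contra fun hqT => ?_
  obtain ⟨q', hq', hq'T⟩ := h.exists_outside_parent_right_iff.mp ⟨q, hq, hqT⟩
  exact hq'T (hO q' hq')

theorem exists_adj_mem (hi : i ∈ T) : ∃ t ∈ T, G.Adj i t := by
  obtain ⟨j, hj, hji⟩ := Finset.exists_mem_ne (s := T) (by have := h.two_le_card; omega) i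
  obtain ⟨w⟩ := h.connected.preconnected ⟨i, hi⟩ ⟨j, hj⟩
  cases w with
  | nil => exact absurd rfl hji
  | cons hadj _ => exact ⟨_, Subtype.coe_prop _, hadj⟩

theorem mem_deltaSet_iff :
    i ∈ deltaSet D E ↔ i ∈ T ∧ (D.IsCollider i ∨ E.IsCollider i) := by
  rw [_root_.mem_deltaSet_iff h.skeleton_acyclic h.skeleton_eq]
  by_cases hi : i ∈ T
  · obtain ⟨t, htT, hit⟩ := h.exists_adj_mem hi
    simp only [hi, true_and, and_iff_right_iff_imp]
    exact fun _ => ⟨t, (h.not_adj_iff_iff t i hit.symm).mpr ⟨htT, hi⟩⟩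
  · simp only [hi, false_and, iff_false, not_and]
    exact fun ⟨x, hx⟩ => absurd (h.adj_iff fun hxi => hi hxi.2) hx

theorem deltaSet_subset : deltaSet D E ⊆ T := fun _ hi => (h.mem_deltaSet_iff.mp hi).1

end IsSubtreeReversal

end SubtreeReversal

section LocalConditions

variable {V : Type} {G : SimpleGraph V} {D E : DAG V} {T : Finset V} {i : V}

def TypeIVCondition (D E : DAG V) (T : Finset V) (i : V) : Prop :=
  2 ≤ (paIn D T i).card → (chIn D T i).card = 1 →
    (∃ q, D.adj q i ∧ q ∉ T) ∨
      ∀ c ∈ chIn D T i, (∃ a b, D.IsVStructure a c b) → ∃ y, E.Essential y c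

def TypeVCondition (D E : DAG V) (T : Finset V) (i : V) : Prop :=
  (paIn D T i).card = 1 → 2 ≤ (chIn D T i).card →
    (∃ q, D.adj q i ∧ q ∉ T) ∨
      ∀ q ∈ paIn D T i, (∃ a b, E.IsVStructure a q b) → ∃ y, D.Essential y q

def TypeVICondition (G : SimpleGraph V) (D E : DAG V) (T : Finset V) (i : V) : Prop :=
  (paIn D T i).card = 1 → (chIn D T i).card = 1 →
    (∀ q ∈ paIn D T i, ReachesAvoiding G T i q (deltaSet D E)) →
    (∀ c ∈ chIn D T i, ReachesAvoiding G T i c (deltaSet D E)) →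
    (∃ q, D.adj q i ∧ q ∉ T) ∨
      ((∀ c ∈ chIn D T i, ∃ y, E.Essential y c) ∧
        (∀ q ∈ paIn D T i, ∃ y, D.Essential y q))

/-- Literally the right-hand side of `essentialFlip_subtree_characterization`. -/
def LocalConditions (G : SimpleGraph V) (D E : DAG V) (T : Finset V) : Prop :=
  ∀ i ∈ T, 2 ≤ (T.filter (fun j => G.Adj i j)).card →
    TypeIVCondition D E T i ∧ TypeVCondition D E T i ∧ TypeVICondition G D E T i

namespace IsSubtreeReversal

variable (h : IsSubtreeReversal G D E T)
include h

theorem typeVCondition_iff (hi : i ∈ T) : TypeVCondition D E T i ↔ TypeIVCondition E D T i := by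
  simp only [TypeVCondition, TypeIVCondition, h.paIn_right hi, ← h.symm.paIn_right hi,
    h.exists_outside_parent_right_iff]
  exact Imp.swap

theorem typeVICondition_iff (hi : i ∈ T) :
    TypeVICondition G D E T i ↔ TypeVICondition G E D T i := by
  simp only [TypeVICondition, h.paIn_right hi, ← h.symm.paIn_right hi,
    h.exists_outside_parent_right_iff, deltaSet_comm h.skeleton_eq]
  exact ⟨fun H h₁ h₂ h₃ h₄ => (H h₂ h₁ h₄ h₃).imp_right And.symm,
    fun H h₁ h₂ h₃ h₄ => (H h₂ h₁ h₄ h₃).imp_right And.symm⟩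

theorem localConditions_symm (hc : LocalConditions G D E T) : LocalConditions G E D T :=
  fun i hi hint =>
    let ⟨h4, h5, h6⟩ := hc i hi hint
    ⟨(h.typeVCondition_iff hi).mp h5, (h.symm.typeVCondition_iff hi).mpr h4,
      (h.typeVICondition_iff hi).mp h6⟩

end IsSubtreeReversal

end LocalConditions

section Forward

variable {V : Type} {G : SimpleGraph V} {D E : DAG V} {T : Finset V} {i : V}

theorem EssentialFlip.symm (hDE : D.skeleton = E.skeleton) (hf : EssentialFlip D E) :
    EssentialFlip E D := by
  refine ⟨fun h => hf.1 h.symm, fun a b ha hb hab => ?_⟩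
  rw [← hDE, deltaSet_comm hDE] at ha hb
  exact (hf.2 a b ha hb (hDE ▸ hab)).symm.imp And.symm And.symm

theorem EssentialFlip.essential_of_adj (hf : EssentialFlip D E) (hG : D.skeleton = G) {a b : V}
    (ha : a ∈ treeSpan G (deltaSet D E)) (hb : b ∈ treeSpan G (deltaSet D E))
    (hab : D.adj a b) : D.Essential a b ∧ E.Essential b a := by
  subst hG
  exact (hf.2 a b ha hb (DAG.skeleton_adj hab)).resolve_right fun h' => D.asymm hab h'.1.1

namespace IsSubtreeReversal

variable (h : IsSubtreeReversal G D E T) (hf : EssentialFlip D E)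
include h hf

theorem typeIVCondition_of_essentialFlip (hi : i ∈ T) : TypeIVCondition D E T i := by
  intro hpa hch
  by_cases hO : ∃ q, D.adj q i ∧ q ∉ T
  · exact Or.inl hO
  push Not at hO
  refine Or.inr fun c hc hv => ?_
  obtain ⟨hcT, hic⟩ := mem_chIn.mp hc
  have hiΔ : i ∈ deltaSet D E :=
    h.mem_deltaSet_iff.mpr ⟨hi, Or.inl (DAG.isCollider_of_one_lt_card_paIn hpa)⟩
  have hcΔ : c ∈ deltaSet D E := h.mem_deltaSet_iff.mpr
    ⟨hcT, Or.inl ((DAG.isCollider_iff_exists_isVStructure h.skeleton_acyclic).mpr hv)⟩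
  have hci := (hf.essential_of_adj h.skeleton_left (mem_treeSpan_of_mem hiΔ)
    (mem_treeSpan_of_mem hcΔ) hic).2
  exact DAG.exists_essential_of_essential_of_not_isCollider h.symm.skeleton_acyclic hci
    ((h.isCollider_right_iff hi hO).not.mpr (by omega))

theorem typeVICondition_of_essentialFlip (hi : i ∈ T) : TypeVICondition G D E T i := by
  intro hpa hch hrq hrc
  by_cases hO : ∃ q, D.adj q i ∧ q ∉ T
  · exact Or.inl hO
  push Not at hO
  obtain ⟨q, hq⟩ := Finset.card_eq_one.mp hpa
  obtain ⟨c, hc⟩ := Finset.card_eq_one.mp hch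
  have hqi := (mem_paIn.mp (hq ▸ Finset.mem_singleton_self q)).2
  have hic := (mem_chIn.mp (hc ▸ Finset.mem_singleton_self c)).2
  obtain ⟨hqS, hiS, hcS⟩ := mem_treeSpan_of_reachesAvoiding h.acyclic
    (h.skeleton_left ▸ DAG.skeleton_adj hqi) (h.skeleton_left ▸ DAG.skeleton_adj hic)
    (fun hqc : q = c => D.asymm hic (hqc ▸ hqi)) (hrq q (by simp [hq])) (hrc c (by simp [hc]))
  have hqi' := (hf.essential_of_adj h.skeleton_left hqS hiS hqi).1
  have hci' := (hf.essential_of_adj h.skeleton_left hiS hcS hic).2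
  rw [hq, hc]
  simp only [Finset.mem_singleton, forall_eq]
  exact Or.inr ⟨DAG.exists_essential_of_essential_of_not_isCollider h.symm.skeleton_acyclic hci'
      ((h.isCollider_right_iff hi hO).not.mpr (by omega)),
    DAG.exists_essential_of_essential_of_not_isCollider h.skeleton_acyclic hqi'
      ((DAG.isCollider_iff_one_lt_card_paIn hO).not.mpr (by omega))⟩

theorem localConditions_of_essentialFlip : LocalConditions G D E T := fun _ hj _ =>
  ⟨h.typeIVCondition_of_essentialFlip hf hj,
    (h.typeVCondition_iff hj).mpr
      (h.symm.typeIVCondition_of_essentialFlip (hf.symm h.skeleton_eq) hj),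
    h.typeVICondition_of_essentialFlip hf hj⟩

end IsSubtreeReversal

end Forward

section Backward

variable {V : Type} {G : SimpleGraph V} {D E : DAG V} {T : Finset V}

namespace IsSubtreeReversal

variable (h : IsSubtreeReversal G D E T) (hc : LocalConditions G D E T)
include h hc

section Arrow

variable {u v : V} (hu : u ∈ T) (hv : v ∈ T) (huv : D.adj u v)
  (hru : ReachesAvoiding G T v u (deltaSet D E)) (hrv : ReachesAvoiding G T u v (deltaSet D E))
include hu hv huv hru hrv

/-- `v` is of type V, or else it is not in `Δ` and is of type VI. -/
theorem descendsFromCollider_of_isCollider_right (hpar : ∀ y, D.adj y v → y = u)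
    (hEu : E.IsCollider u) : D.DescendsFromCollider u := by
  have hpav : paIn D T v = {u} := Finset.eq_singleton_iff_unique_mem.mpr
    ⟨mem_paIn.mpr ⟨hu, huv⟩, fun y hy => hpar y (mem_paIn.mp hy).2⟩
  have hO : ∀ q, D.adj q v → q ∈ T := fun q hq => hpar q hq ▸ hu
  have hnO : ¬ ∃ q, D.adj q v ∧ q ∉ T := fun ⟨q, hq, hqT⟩ => hqT (hO q hq)
  have hvu : G.Adj v u := (h.skeleton_left ▸ DAG.skeleton_adj huv).symm
  have hEv : ∃ a b, E.IsVStructure a u b :=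
    (DAG.isCollider_iff_exists_isVStructure h.symm.skeleton_acyclic).mp hEu
  rw [← DAG.exists_essential_iff h.skeleton_acyclic]
  by_cases hch : 2 ≤ (chIn D T v).card
  · have hint := hch.trans (card_chIn_le_card_filter_adj h.skeleton_left v)
    exact (((hc v hv hint).2.1 (by simp [hpav]) hch).resolve_left hnO) u (by simp [hpav]) hEv
  have hvΔ : v ∉ deltaSet D E := by
    rw [h.mem_deltaSet_iff, DAG.isCollider_iff_one_lt_card_paIn hO,
      h.isCollider_right_iff hv hO, hpav]
    simp only [Finset.card_singleton]
    omega
  obtain ⟨w, hwT, hvw, hwu, hrw⟩ := hrv.exists_adj hvΔ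
  have hvw' : D.adj v w := ((h.skeleton_left ▸ hvw : D.skeleton.Adj v w)).resolve_right
    fun hwv => hwu (hpar w hwv)
  have hchv : chIn D T v = {w} :=
    Finset.eq_singleton_of_card_le_one (by omega) (mem_chIn.mpr ⟨hwT, hvw'⟩)
  have hint := two_le_card_filter_adj hu hwT hvu hvw hwu.symm
  obtain hO' | ⟨-, hess⟩ := (hc v hv hint).2.2 (by simp [hpav]) (by simp [hchv])
    (by simpa [hpav] using hru) (by simpa [hchv] using hrw)
  exacts [absurd hO' hnO, hess u (by simp [hpav])]

/-- `u` is not in `Δ`, has no parents outside `T` and `v` as its only child in `T`; the path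
from `u` towards `Δ` then starts at a parent `q` of `u`, and `u` is of type VI. -/
theorem descendsFromCollider_of_not_isCollider_right (hEu : ¬ E.IsCollider u) :
    D.DescendsFromCollider u := by
  by_cases hDu : D.IsCollider u
  · exact ⟨u, hDu, .refl⟩
  have hEvu : E.adj v u := h.adj_swap hu hv huv
  have hEpar : ∀ y, E.adj y u → y = v := fun y hy =>
    by_contra fun hyv => hEu ⟨y, v, hyv, hy, hEvu⟩
  have hO : ∀ q, D.adj q u → q ∈ T := fun q hq => by_contra fun hqT =>
    hqT (hEpar q ((h.adj_iff fun hq' => hqT hq'.1).mp hq) ▸ hv)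
  have hnO : ¬ ∃ q, D.adj q u ∧ q ∉ T := fun ⟨q, hq, hqT⟩ => hqT (hO q hq)
  have huΔ : u ∉ deltaSet D E := fun hΔ =>
    (h.mem_deltaSet_iff.mp hΔ).2.elim hDu hEu
  obtain ⟨q, hqT, huq, hqv, hrq⟩ := hru.exists_adj huΔ
  have hqu : D.adj q u := ((h.skeleton_left ▸ huq : D.skeleton.Adj u q)).resolve_left
    fun huq' => hqv (hEpar q (h.adj_swap hu hqT huq'))
  have hpau : paIn D T u = {q} := Finset.eq_singleton_of_card_le_one
    (by rw [DAG.isCollider_iff_one_lt_card_paIn hO] at hDu; omega) (mem_paIn.mpr ⟨hqT, hqu⟩)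
  have hchu : chIn D T u = {v} := Finset.eq_singleton_iff_unique_mem.mpr
    ⟨mem_chIn.mpr ⟨hv, huv⟩,
      fun t ht => hEpar t (h.adj_swap hu (mem_chIn.mp ht).1 (mem_chIn.mp ht).2)⟩
  have hint := two_le_card_filter_adj hqT hv huq (h.skeleton_left ▸ DAG.skeleton_adj huv) hqv
  obtain hO' | ⟨-, hess⟩ := (hc u hu hint).2.2 (by simp [hpau]) (by simp [hchu])
    (by simpa [hpau] using hrq) (by simpa [hchu] using hrv)
  · exact absurd hO' hnO
  · exact ((DAG.exists_essential_iff h.skeleton_acyclic).mp (hess q (by simp [hpau]))).of_adj hqu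

theorem descendsFromCollider_of_reachesAvoiding : D.DescendsFromCollider v := by
  by_cases hDv : D.IsCollider v
  · exact ⟨v, hDv, .refl⟩
  have hpar : ∀ y, D.adj y v → y = u := fun y hy =>
    by_contra fun hyu => hDv ⟨y, u, hyu, hy, huv⟩
  refine DAG.DescendsFromCollider.of_adj ?_ huv
  by_cases hEu : E.IsCollider u
  · exact h.descendsFromCollider_of_isCollider_right hc hu hv huv hru hrv hpar hEu
  · exact h.descendsFromCollider_of_not_isCollider_right hc hu hv huv hru hrv hEu

end Arrow

theorem essential_of_mem_treeSpan {a b : V}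
    (ha : a ∈ treeSpan G (deltaSet D E)) (hb : b ∈ treeSpan G (deltaSet D E))
    (hab : D.adj a b) : D.Essential a b := by
  have hspan := treeSpan_subset h.acyclic h.connected h.deltaSet_subset
  have hba : b ≠ a := (DAG.skeleton_adj hab).ne'
  exact DAG.essential_of_descendsFromCollider h.skeleton_acyclic hab <|
    h.descendsFromCollider_of_reachesAvoiding hc (hspan ha) (hspan hb) hab
      (reachesAvoiding_of_mem_treeSpan h.acyclic h.connected h.deltaSet_subset ha hba)
      (reachesAvoiding_of_mem_treeSpan h.acyclic h.connected h.deltaSet_subset hb hba.symm)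

theorem essential_and_essential_of_mem_treeSpan {a b : V}
    (ha : a ∈ treeSpan G (deltaSet D E)) (hb : b ∈ treeSpan G (deltaSet D E))
    (hab : D.adj a b) : D.Essential a b ∧ E.Essential b a := by
  have hspan := treeSpan_subset h.acyclic h.connected h.deltaSet_subset
  have hba := h.adj_swap (hspan ha) (hspan hb) hab
  refine ⟨h.essential_of_mem_treeSpan hc ha hb hab, ?_⟩
  rw [← deltaSet_comm h.skeleton_eq] at ha hb
  exact h.symm.essential_of_mem_treeSpan (h.localConditions_symm hc) hb ha hba

theorem essentialFlip_of_localConditions (hΔ : (deltaSet D E).Nonempty) : EssentialFlip D E := by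
  refine ⟨not_markovEquiv_of_mem_deltaSet h.skeleton_acyclic h.skeleton_eq hΔ.some_mem,
    fun a b ha hb hab => ?_⟩
  rw [h.skeleton_left] at ha hb
  rcases hab with hab | hba
  exacts [Or.inl (h.essential_and_essential_of_mem_treeSpan hc ha hb hab),
    Or.inr (h.essential_and_essential_of_mem_treeSpan hc hb ha hba)]

end IsSubtreeReversal

end Backward

/-- **Characterization of essential flips of DAGs differing on a subtree.**  Let `D`, `E` be
DAGs with common tree skeleton `G`, whose differing edges form a subtree with vertex set
`Tset`, and with `Δ(D,E) ≠ ∅`.  Then `{D, E}` is an essential flip iff every internal node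
`i` of the subtree (degree `≥ 2` in it) satisfies the local criterion of its type (types
I–III impose no condition; types IV, V, VI impose the tabulated conditions, the unique
element of `T ∩ ch_D(i)` resp. `T ∩ pa_D(i)` being quantified over the singleton). -/
theorem essentialFlip_subtree_characterization {p : ℕ} (G : SimpleGraph (Fin p))
    (htree : G.IsTree) (D E : DAG (Fin p)) (hD : D.skeleton = G) (hE : E.skeleton = G)
    (Tset : Finset (Fin p)) (hT2 : 2 ≤ Tset.card)
    (hconn : (G.induce (↑Tset : Set (Fin p))).Connected)
    (hdiff : ∀ a b : Fin p, G.Adj a b → (¬ (D.adj a b ↔ E.adj a b) ↔ (a ∈ Tset ∧ b ∈ Tset)))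
    (hdelta : (deltaSet D E).Nonempty) :
    EssentialFlip D E ↔
      ∀ i ∈ Tset, 2 ≤ (Tset.filter (fun j => G.Adj i j)).card →
        -- Type IV : `|T ∩ pa(i)| ≥ 2` and `|T ∩ ch(i)| = 1`
        (2 ≤ (paIn D Tset i).card → (chIn D Tset i).card = 1 →
          (∃ q, D.adj q i ∧ q ∉ Tset) ∨
            ∀ c ∈ chIn D Tset i,
              (∃ a b, D.IsVStructure a c b) → ∃ y, E.Essential y c) ∧
        -- Type V : `|T ∩ pa(i)| = 1` and `|T ∩ ch(i)| ≥ 2`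
        ((paIn D Tset i).card = 1 → 2 ≤ (chIn D Tset i).card →
          (∃ q, D.adj q i ∧ q ∉ Tset) ∨
            ∀ q ∈ paIn D Tset i,
              (∃ a b, E.IsVStructure a q b) → ∃ y, D.Essential y q) ∧
        -- Type VI : `|T ∩ pa(i)| = 1` and `|T ∩ ch(i)| = 1`
        ((paIn D Tset i).card = 1 → (chIn D Tset i).card = 1 →
          -- if both connected components of `T ∖ {i}` contain nodes of `Δ(D,E)` …
          (∀ q ∈ paIn D Tset i, ReachesAvoiding G Tset i q (deltaSet D E)) →
          (∀ c ∈ chIn D Tset i, ReachesAvoiding G Tset i c (deltaSet D E)) →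
          (∃ q, D.adj q i ∧ q ∉ Tset) ∨
            ((∀ c ∈ chIn D Tset i, ∃ y, E.Essential y c) ∧
             (∀ q ∈ paIn D Tset i, ∃ y, D.Essential y q))) := by
  have h : IsSubtreeReversal G D E Tset := ⟨htree.isAcyclic, hD, hE, hT2, hconn, hdiff⟩
  exact ⟨h.localConditions_of_essentialFlip,
    fun hc => h.essentialFlip_of_localConditions hc hdelta⟩
end

section
/- Let I_p be the path on p ≥ 2 nodes and C_p the cycle on p ≥ 4 nodes. Then the image of CIM_{I_p} under the coordinate projection sending the coordinate indexed by {i−1, i, i+1} to the (i−1)-st coordinate of ℝ^{p−2} (for i = 2, …, p−1) equals STAB(I_{p−2}), and this projection is an affine bijection between CIM_{I_p} and STAB(I_{p−2}). Likewise, the image of CIM_{C_p} under the projection sending the coordinate indexed by {i−1, i, i+1} (indices mod p) to the (i−1)-st coordinate of ℝ^p is the convex hull of the incidence vectors χ_S of the non-empty stable sets S of C_p, and this projection is an affine bijection onto its image. -/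
open Classical

/-- The path graph `I_m` on `Fin m`, with edges `{i, i+1}`. -/
def pathG (m : ℕ) : SimpleGraph (Fin m) :=
  SimpleGraph.fromRel (fun i j => (i : ℕ) + 1 = (j : ℕ))

/-- The cycle graph `C_m` on `Fin m`, with edges `{i, i+1}` taken modulo `m`. -/
def cycleG (m : ℕ) : SimpleGraph (Fin m) :=
  SimpleGraph.fromRel (fun i j => ((i : ℕ) + 1) % m = (j : ℕ))

/-- The incidence vector of a finite set `S`. -/
noncomputable def indVec {W : Type} (S : Finset W) : W → ℝ :=
  fun v => if v ∈ S then 1 else 0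

/-- `S` is a stable (independent) set of `G`. -/
def IsStable {W : Type} (G : SimpleGraph W) (S : Finset W) : Prop :=
  ∀ a ∈ S, ∀ b ∈ S, ¬ G.Adj a b

/-- The stable set polytope of `G`: the convex hull of the incidence vectors of the stable
sets of `G`. -/
noncomputable def STAB {W : Type} (G : SimpleGraph W) : Set (W → ℝ) :=
  convexHull ℝ { f | ∃ S : Finset W, IsStable G S ∧ f = indVec S }

/-- The triple `{t, t+1, t+2}` of consecutive vertices of the path `I_{n+2}`. -/
def pathTriple (n : ℕ) (t : Fin n) : Finset (Fin (n + 2)) :=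
  {⟨t.val, by omega⟩, ⟨t.val + 1, by omega⟩, ⟨t.val + 2, by omega⟩}

/-- The coordinate projection for the path `I_{n+2}`, sending the coordinate indexed by the
triple of consecutive vertices `{t, t+1, t+2}` to the `t`-th coordinate of `ℝ^n`. -/
noncomputable def pathProj (n : ℕ) : (Finset (Fin (n + 2)) → ℝ) →ₗ[ℝ] (Fin n → ℝ) where
  toFun f t := f (pathTriple n t)
  map_add' := by intro f g; rfl
  map_smul' := by intro c f; rfl

/-- The coordinate projection for the cycle `C_{n+4}`, sending the coordinate indexed by the
triple of consecutive vertices `{t, t+1, t+2}` (mod `n+4`) to the `t`-th coordinate. -/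
noncomputable def cycleProj (n : ℕ) : (Finset (Fin (n + 4)) → ℝ) →ₗ[ℝ] (Fin (n + 4) → ℝ) where
  toFun f t := f {t, t + 1, t + 2}
  map_add' := by intro f g; rfl
  map_smul' := by intro c f; rfl

/-!
Every vertex of a path or a cycle has at most two neighbours, so the characteristic imset of a
DAG `D` with that skeleton can only be nonzero on edges, where it is always `1`, and on triples
`{t, t + 1, t + 2}`, where it is `1` exactly when `t → t + 1 ← t + 2` is a collider of `D`. The
imset is thus constant off the triple coordinates, hence determined on `CIM` by its projection,
and the projection of `D.imset` is the incidence vector of the set of colliders (indexed by `t`).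
Colliders at adjacent positions would orient the edge between their midpoints both ways, so this
set is stable. Conversely, orienting every edge towards a prescribed stable set of midpoints and
the remaining edges along a linear order realises every stable set; on a cycle the linear order
starts at one of the prescribed midpoints so that it creates no further collider, and the set of
colliders is never empty there because a sink of `D` is a collider.
-/

namespace DAG

variable {V : Type}

lemma acyclic_of_rank {β : Type*} [Preorder β] {adj : V → V → Prop} (ρ : V → β)
    (h : ∀ i j, adj i j → ρ i < ρ j) (v : V) : ¬ Relation.TransGen adj v v := by
  intro hv
  have hlt : Relation.TransGen (· < ·) (ρ v) (ρ v) := hv.lift ρ h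
  rw [Relation.transGen_eq_self] at hlt
  exact lt_irrefl _ hlt

variable (D : DAG V)

lemma not_adj_of_adj_s13 {i j : V} (h : D.adj i j) : ¬ D.adj j i :=
  fun h' => D.acyclic i (.tail (.single h) h')

lemma exists_sink_s13 [Finite V] [Nonempty V] : ∃ v, ∀ w, ¬ D.adj v w := by
  let R := fun a b => Relation.TransGen D.adj b a
  have : IsTrans V R := ⟨fun _ _ _ h₁ h₂ => h₂.trans h₁⟩
  have : Std.Irrefl R := ⟨D.acyclic⟩
  obtain ⟨v, -, hv⟩ := (Finite.wellFounded_of_trans_of_irrefl R).has_min Set.univ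
    (Set.univ_nonempty (α := V))
  exact ⟨v, fun w hw => hv w trivial (.single hw)⟩

variable {D} {G : SimpleGraph V}

lemma adj_of_skeleton_eq (hD : D.skeleton = G) {i j : V} (h : D.adj i j) : G.Adj i j :=
  hD ▸ Or.inl h

lemma adj_or_adj_of_skeleton_eq (hD : D.skeleton = G) {i j : V} (h : G.Adj i j) :
    D.adj i j ∨ D.adj j i := by
  subst hD; exact h

def orientTowards {β : Type} [LinearOrder β] (G : SimpleGraph V) (C : Finset V)
    (hC : IsStable G C) (r : V → β) : DAG V where
  adj i j := G.Adj i j ∧ (j ∈ C ∨ (i ∉ C ∧ r i < r j))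
  acyclic := acyclic_of_rank (fun v => if v ∈ C then ⊤ else WithTop.some (r v)) <| by
    rintro i j ⟨hij, hj | ⟨hi, hr⟩⟩
    · have hi : i ∉ C := fun hi => hC i hi j hj hij
      simp [hi, hj]
    · by_cases hj : j ∈ C <;> simp [hi, hj, hr]

section orientTowards

variable {β : Type} [LinearOrder β] {C : Finset V} {hC : IsStable G C} {r : V → β}

lemma orientTowards_skeleton (hr : Function.Injective r) :
    (orientTowards G C hC r).skeleton = G := by
  ext i j
  refine ⟨fun h => h.elim And.left fun h => h.1.symm, fun h => ?_⟩
  have hne : r i ≠ r j := hr.ne (G.ne_of_adj h)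
  by_cases hi : i ∈ C <;> by_cases hj : j ∈ C
  · exact absurd h (hC i hi j hj)
  · exact .inr ⟨h.symm, .inl hi⟩
  · exact .inl ⟨h, .inl hj⟩
  · rcases hne.lt_or_gt with hlt | hlt
    · exact .inl ⟨h, .inr ⟨hi, hlt⟩⟩
    · exact .inr ⟨h.symm, .inr ⟨hj, hlt⟩⟩

lemma orientTowards_adj {i j : V} (h : G.Adj i j) :
    (orientTowards G C hC r).adj i j ↔ j ∈ C ∨ (i ∉ C ∧ r i < r j) :=
  and_iff_right h

end orientTowards

end DAG

namespace SimpleGraph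

variable {V : Type} [DecidableEq V] (G : SimpleGraph V)

noncomputable def edgeIndicator (S : Finset V) : ℝ :=
  if ∃ i j, G.Adj i j ∧ S = {i, j} then 1 else 0

variable {G}

lemma eq_pair_or_triple_of_forall_adj
    (hdeg : ∀ i a b c, G.Adj a i → G.Adj b i → G.Adj c i → a = b ∨ a = c ∨ b = c)
    {S : Finset V} {i : V} (hi : i ∈ S) (hcard : 2 ≤ S.card)
    (hS : ∀ j ∈ S, j ≠ i → G.Adj j i) :
    (∃ j, G.Adj j i ∧ S = {i, j}) ∨ ∃ a c, a ≠ c ∧ G.Adj a i ∧ G.Adj c i ∧ S = {i, a, c} := by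
  have hadj : ∀ j ∈ S.erase i, G.Adj j i := fun j hj =>
    hS j (Finset.mem_of_mem_erase hj) (Finset.ne_of_mem_erase hj)
  have hpos : 1 ≤ (S.erase i).card := by rw [Finset.card_erase_of_mem hi]; omega
  rw [← Finset.insert_erase hi]
  rcases hpos.eq_or_lt with h1 | h2
  · obtain ⟨j, hj⟩ := Finset.card_eq_one.1 h1.symm
    exact .inl ⟨j, hadj j (hj ▸ Finset.mem_singleton_self j), by rw [hj]⟩
  · obtain ⟨a, ha, c, hc, hac⟩ := Finset.one_lt_card.1 h2
    refine .inr ⟨a, c, hac, hadj a ha, hadj c hc, ?_⟩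
    congr 1
    refine Finset.Subset.antisymm (fun d hd => ?_)
      (Finset.insert_subset ha (Finset.singleton_subset_iff.2 hc))
    rcases hdeg i a c d (hadj a ha) (hadj c hc) (hadj d hd) with h | h | h
    · exact absurd h hac
    · simp [h]
    · simp [h]

end SimpleGraph

namespace DAG

variable {V : Type} [DecidableEq V] {G : SimpleGraph V} {D : DAG V}

lemma imset_pair (hD : D.skeleton = G) {i j : V} (h : G.Adj i j) : D.imset {i, j} = 1 := by
  rw [imset, if_pos]
  refine ⟨(Finset.card_pair (G.ne_of_adj h)).ge, ?_⟩
  rcases adj_or_adj_of_skeleton_eq hD h with h' | h'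
  · exact ⟨j, by simp, by simp [h']⟩
  · exact ⟨i, by simp, by simp [h']⟩

lemma imset_triple (hD : D.skeleton = G) {a b c : V} (hab : G.Adj a b) (hcb : G.Adj c b)
    (hac : a ≠ c) (hnac : ¬ G.Adj a c) :
    D.imset {a, b, c} = if D.adj a b ∧ D.adj c b then 1 else 0 := by
  have hcard : ({a, b, c} : Finset V).card = 3 :=
    Finset.card_eq_three.2 ⟨a, b, c, G.ne_of_adj hab, hac, (G.ne_of_adj hcb).symm, rfl⟩
  have hca : ¬ D.adj c a := fun h => hnac (adj_of_skeleton_eq hD h).symm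
  have hac' : ¬ D.adj a c := fun h => hnac (adj_of_skeleton_eq hD h)
  simp only [imset, hcard, Finset.mem_insert, Finset.mem_singleton, forall_eq_or_imp, forall_eq,
    exists_eq_or_imp]
  congr 1
  simp [hca, hac', hac, hac.symm, G.ne_of_adj hab, G.ne_of_adj hcb]

lemma imset_eq_edgeIndicator (hD : D.skeleton = G)
    (hdeg : ∀ i a b c, G.Adj a i → G.Adj b i → G.Adj c i → a = b ∨ a = c ∨ b = c)
    {T : Set (Finset V)} (hT : ∀ i a c, a ≠ c → G.Adj a i → G.Adj c i → {i, a, c} ∈ T)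
    {S : Finset V} (hS : S ∉ T) : D.imset S = G.edgeIndicator S := by
  by_cases hedge : ∃ i j, G.Adj i j ∧ S = {i, j}
  · obtain ⟨i, j, hij, rfl⟩ := hedge
    rw [imset_pair hD hij, SimpleGraph.edgeIndicator, if_pos ⟨i, j, hij, rfl⟩]
  rw [SimpleGraph.edgeIndicator, if_neg hedge, imset, if_neg]
  rintro ⟨hcard, i, hi, hpa⟩
  rcases SimpleGraph.eq_pair_or_triple_of_forall_adj hdeg hi hcard
      (fun j hj hji => adj_of_skeleton_eq hD (hpa j hj hji)) with
    ⟨j, hji, rfl⟩ | ⟨a, c, hac, ha, hc, rfl⟩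
  · exact hedge ⟨i, j, hji.symm, rfl⟩
  · exact hS (hT i a c hac ha hc)

end DAG

lemma injOn_convexHull_of_eqOn_compl_range {ι κ : Type*} {s : Set (ι → ℝ)} (e : κ → ι)
    (c : ι → ℝ) (hs : ∀ f ∈ s, Set.EqOn f c (Set.range e)ᶜ) {π : (ι → ℝ) → κ → ℝ}
    (hπ : ∀ f k, π f k = f (e k)) : Set.InjOn π (convexHull ℝ s) := by
  have hconv : convexHull ℝ s ⊆ (Set.range e)ᶜ.pi fun S => {c S} :=
    convexHull_min (fun f hf S hS => hs f hf hS) (convex_pi fun _ _ => convex_singleton _)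
  intro f hf g hg hfg
  funext S
  by_cases hS : S ∈ Set.range e
  · obtain ⟨k, rfl⟩ := hS
    rw [← hπ f, ← hπ g, hfg]
  · rw [hconv hf S hS, hconv hg S hS]

section Path

lemma pathG_adj {m : ℕ} {i j : Fin m} :
    (pathG m).Adj i j ↔ (i : ℕ) + 1 = j ∨ (j : ℕ) + 1 = i := by
  simp only [pathG, SimpleGraph.fromRel_adj, ne_eq, Fin.ext_iff]
  omega

lemma pathG_forall_adj_three {m : ℕ} {i a b c : Fin m} (ha : (pathG m).Adj a i)
    (hb : (pathG m).Adj b i) (hc : (pathG m).Adj c i) : a = b ∨ a = c ∨ b = c := by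
  simp only [pathG_adj, Fin.ext_iff] at *
  omega

variable {n : ℕ}

lemma pathG_triple_mem_range {i a c : Fin (n + 2)} (hac : a ≠ c)
    (ha : (pathG (n + 2)).Adj a i) (hc : (pathG (n + 2)).Adj c i) :
    {i, a, c} ∈ Set.range (pathTriple n) := by
  rw [pathG_adj] at ha hc
  rw [Ne, Fin.ext_iff] at hac
  have := i.isLt
  refine ⟨⟨min a c, by omega⟩, ?_⟩
  ext x
  simp only [pathTriple, Finset.mem_insert, Finset.mem_singleton, Fin.ext_iff]
  omega

noncomputable def pathColliders (D : DAG (Fin (n + 2))) : Finset (Fin n) :=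
  {t : Fin n | D.adj ⟨t, by omega⟩ ⟨t + 1, by omega⟩ ∧ D.adj ⟨t + 2, by omega⟩ ⟨t + 1, by omega⟩}

lemma pathProj_imset {D : DAG (Fin (n + 2))} (hD : D.skeleton = pathG (n + 2)) :
    pathProj n D.imset = indVec (pathColliders D) := by
  funext t
  change D.imset (pathTriple n t) = _
  rw [pathTriple, DAG.imset_triple hD (by simp [pathG_adj]) (by simp [pathG_adj])
    (by simp [Fin.ext_iff]) (by simp [pathG_adj]; omega)]
  simp [indVec, pathColliders]

lemma isStable_pathColliders (D : DAG (Fin (n + 2))) : IsStable (pathG n) (pathColliders D) := by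
  suffices h : ∀ u ∈ pathColliders D, ∀ v ∈ pathColliders D, (u : ℕ) + 1 ≠ v by
    intro u hu v hv huv
    rcases pathG_adj.1 huv with h' | h'
    exacts [h u hu v hv h', h v hv u hu h']
  intro u hu v hv huv
  simp only [pathColliders, Finset.mem_filter, Finset.mem_univ, true_and] at hu hv
  have e₁ : (⟨v, by omega⟩ : Fin (n + 2)) = ⟨u + 1, by omega⟩ := Fin.ext huv.symm
  have e₂ : (⟨v + 1, by omega⟩ : Fin (n + 2)) = ⟨u + 2, by omega⟩ := Fin.ext (by simp; omega)
  rw [e₁, e₂] at hv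
  exact D.not_adj_of_adj_s13 hu.2 hv.1

lemma exists_pathColliders_eq {S : Finset (Fin n)} (hS : IsStable (pathG n) S) :
    ∃ D : DAG (Fin (n + 2)), D.skeleton = pathG (n + 2) ∧ pathColliders D = S := by
  set C := S.image fun t : Fin n => (⟨t + 1, by omega⟩ : Fin (n + 2))
  have hmemC {t : Fin n} : (⟨t + 1, by omega⟩ : Fin (n + 2)) ∈ C ↔ t ∈ S := by
    simp [C, Fin.val_inj]
  have hC : IsStable (pathG (n + 2)) C := by
    simp only [C, IsStable, Finset.mem_image]
    rintro _ ⟨u, hu, rfl⟩ _ ⟨v, hv, rfl⟩ huv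
    exact hS u hu v hv (by simpa [pathG_adj] using huv)
  refine ⟨DAG.orientTowards (pathG (n + 2)) C hC id,
    DAG.orientTowards_skeleton Function.injective_id, ?_⟩
  ext t
  simp only [pathColliders, Finset.mem_filter, Finset.mem_univ, true_and]
  rw [DAG.orientTowards_adj (by simp [pathG_adj]), DAG.orientTowards_adj (by simp [pathG_adj]),
    hmemC]
  simp [Fin.lt_def]
  tauto

lemma pathProj_image_imsets (n : ℕ) :
    pathProj n '' {f | ∃ D : DAG (Fin (n + 2)), D.skeleton = pathG (n + 2) ∧ f = D.imset} =
      {f | ∃ S : Finset (Fin n), IsStable (pathG n) S ∧ f = indVec S} := by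
  ext g
  constructor
  · rintro ⟨_, ⟨D, hD, rfl⟩, rfl⟩
    exact ⟨_, isStable_pathColliders D, pathProj_imset hD⟩
  · rintro ⟨S, hS, rfl⟩
    obtain ⟨D, hD, rfl⟩ := exists_pathColliders_eq hS
    exact ⟨_, ⟨D, hD, rfl⟩, pathProj_imset hD⟩

lemma pathProj_injOn_CIM (n : ℕ) : Set.InjOn (pathProj n) (CIM (pathG (n + 2))) := by
  refine injOn_convexHull_of_eqOn_compl_range (pathTriple n) (pathG (n + 2)).edgeIndicator ?_
    fun _ _ => rfl
  rintro _ ⟨D, hD, rfl⟩ S hS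
  exact DAG.imset_eq_edgeIndicator hD (fun _ _ _ _ => pathG_forall_adj_three)
    (fun _ _ _ => pathG_triple_mem_range) hS

end Path

section Cycle

open Fin.CommRing

lemma Fin.add_one_eq_zero_of_add_one_lt {m : ℕ} {x : Fin (m + 1)} (h : x + 1 < x) :
    x + 1 = 0 := by
  rw [Fin.add_one_le_iff.1 h.le, Fin.last_add_one]

lemma Fin.add_natCast_ne_self {m : ℕ} [NeZero m] (t : Fin m) {k : ℕ} (h0 : 0 < k)
    (hk : k < m) : t + k ≠ t := by
  rw [Ne, add_eq_left, Fin.natCast_eq_zero]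
  exact fun h => (Nat.le_of_dvd h0 h).not_gt hk

section

variable {m : ℕ}

lemma cycleG_adj {i j : Fin (m + 2)} : (cycleG (m + 2)).Adj i j ↔ i + 1 = j ∨ j + 1 = i := by
  have hrel (a b : Fin (m + 2)) : ((a : ℕ) + 1) % (m + 2) = b ↔ a + 1 = b := by
    rw [Fin.ext_iff, Fin.val_add, Fin.val_one]
  simp only [cycleG, SimpleGraph.fromRel_adj, hrel, ne_eq, and_iff_right_iff_imp]
  intro h hij
  subst hij
  exact Fin.add_natCast_ne_self i (k := 1) one_pos (by omega) (by simpa using h.elim id id)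

lemma cycleG_adj_iff_eq {a i : Fin (m + 2)} :
    (cycleG (m + 2)).Adj a i ↔ a = i - 1 ∨ a = i + 1 := by
  rw [cycleG_adj, eq_sub_iff_add_eq, eq_comm (a := a)]

lemma cycleG_forall_adj_three {i a b c : Fin (m + 2)} (ha : (cycleG (m + 2)).Adj a i)
    (hb : (cycleG (m + 2)).Adj b i) (hc : (cycleG (m + 2)).Adj c i) : a = b ∨ a = c ∨ b = c := by
  rw [cycleG_adj_iff_eq] at ha hb hc
  rcases ha with rfl | rfl <;> rcases hb with rfl | rfl <;> rcases hc with rfl | rfl <;> simp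

lemma cycleG_triple_mem_range {i a c : Fin (m + 2)} (hac : a ≠ c)
    (ha : (cycleG (m + 2)).Adj a i) (hc : (cycleG (m + 2)).Adj c i) :
    {i, a, c} ∈ Set.range fun t : Fin (m + 2) => ({t, t + 1, t + 2} : Finset _) := by
  refine ⟨i - 1, ?_⟩
  rw [cycleG_adj_iff_eq] at ha hc
  simp only [sub_add_cancel, show i - 1 + 2 = i + 1 by ring]
  ext x
  simp only [Finset.mem_insert, Finset.mem_singleton]
  rcases ha with rfl | rfl <;> rcases hc with rfl | rfl <;> tauto

lemma cycleG_adj_add_one (t : Fin (m + 2)) : (cycleG (m + 2)).Adj t (t + 1) :=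
  cycleG_adj.2 (.inl rfl)

lemma cycleG_adj_add_two (t : Fin (m + 2)) : (cycleG (m + 2)).Adj (t + 2) (t + 1) :=
  cycleG_adj.2 (.inr (by ring))

end

variable {n : ℕ}

lemma cycleG_not_adj_add_two (t : Fin (n + 4)) : ¬ (cycleG (n + 4)).Adj t (t + 2) := by
  rw [cycleG_adj, show t + 2 = t + 1 + (1 : ℕ) by push_cast; ring,
    show t + 1 + (1 : ℕ) + 1 = t + (3 : ℕ) by push_cast; ring]
  exact not_or.2 ⟨(Fin.add_natCast_ne_self _ one_pos (by omega)).symm,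
    Fin.add_natCast_ne_self _ (by omega) (by omega)⟩

noncomputable def cycleColliders (D : DAG (Fin (n + 4))) : Finset (Fin (n + 4)) :=
  {t | D.adj t (t + 1) ∧ D.adj (t + 2) (t + 1)}

lemma cycleProj_imset {D : DAG (Fin (n + 4))} (hD : D.skeleton = cycleG (n + 4)) :
    cycleProj n D.imset = indVec (cycleColliders D) := by
  funext t
  change D.imset {t, t + 1, t + 2} = _
  have hne : t ≠ t + 2 := by
    simpa [eq_comm] using Fin.add_natCast_ne_self t (k := 2) (by omega) (by omega)
  rw [DAG.imset_triple hD (cycleG_adj_add_one t) (cycleG_adj_add_two t) hne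
    (cycleG_not_adj_add_two t)]
  simp [indVec, cycleColliders]

lemma isStable_cycleColliders (D : DAG (Fin (n + 4))) :
    IsStable (cycleG (n + 4)) (cycleColliders D) := by
  suffices h : ∀ u ∈ cycleColliders D, ∀ v ∈ cycleColliders D, u + 1 ≠ v by
    intro u hu v hv huv
    rcases cycleG_adj.1 huv with h' | h'
    exacts [h u hu v hv h', h v hv u hu h']
  rintro u hu _ hv rfl
  simp only [cycleColliders, Finset.mem_filter, Finset.mem_univ, true_and] at hu hv
  rw [show u + 1 + 1 = u + 2 by ring] at hv
  exact D.not_adj_of_adj_s13 hu.2 hv.1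

lemma cycleColliders_nonempty {D : DAG (Fin (n + 4))} (hD : D.skeleton = cycleG (n + 4)) :
    (cycleColliders D).Nonempty := by
  obtain ⟨v, hv⟩ := D.exists_sink_s13
  have hin {u : Fin (n + 4)} (hu : (cycleG (n + 4)).Adj u v) : D.adj u v :=
    (DAG.adj_or_adj_of_skeleton_eq hD hu).resolve_right (hv u)
  refine ⟨v - 1, ?_⟩
  simp only [cycleColliders, Finset.mem_filter, Finset.mem_univ, true_and, sub_add_cancel,
    show v - 1 + 2 = v + 1 by ring]
  exact ⟨hin (cycleG_adj_iff_eq.2 (.inl rfl)), hin (cycleG_adj_iff_eq.2 (.inr rfl))⟩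

lemma exists_cycleColliders_eq {S : Finset (Fin (n + 4))} (hS : IsStable (cycleG (n + 4)) S)
    (hne : S.Nonempty) :
    ∃ D : DAG (Fin (n + 4)), D.skeleton = cycleG (n + 4) ∧ cycleColliders D = S := by
  set C := S.image (· + 1)
  have hmemC {t : Fin (n + 4)} : t + 1 ∈ C ↔ t ∈ S := by simp [C]
  have hC : IsStable (cycleG (n + 4)) C := by
    simp only [C, IsStable, Finset.mem_image]
    rintro _ ⟨u, hu, rfl⟩ _ ⟨v, hv, rfl⟩ huv
    exact hS u hu v hv (by simpa [cycleG_adj] using huv)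
  obtain ⟨s, hs⟩ := hne
  refine ⟨DAG.orientTowards (cycleG (n + 4)) C hC (· - (s + 1)),
    DAG.orientTowards_skeleton sub_left_injective, ?_⟩
  ext t
  simp only [cycleColliders, Finset.mem_filter, Finset.mem_univ, true_and]
  rw [DAG.orientTowards_adj (cycleG_adj_add_one t), DAG.orientTowards_adj (cycleG_adj_add_two t),
    hmemC]
  have hcoll : t + 2 - (s + 1) < t + 1 - (s + 1) → t + 2 ∈ C := fun h => by
    have e : t + 1 - (s + 1) + 1 = t + 2 - (s + 1) := by ring
    have h0 := Fin.add_one_eq_zero_of_add_one_lt (e ▸ h)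
    rw [e, sub_eq_zero] at h0
    exact h0 ▸ Finset.mem_image_of_mem _ hs
  tauto

lemma cycleProj_image_imsets (n : ℕ) :
    cycleProj n '' {f | ∃ D : DAG (Fin (n + 4)), D.skeleton = cycleG (n + 4) ∧ f = D.imset} =
      {f | ∃ S : Finset (Fin (n + 4)),
        S.Nonempty ∧ IsStable (cycleG (n + 4)) S ∧ f = indVec S} := by
  ext g
  constructor
  · rintro ⟨_, ⟨D, hD, rfl⟩, rfl⟩
    exact ⟨_, cycleColliders_nonempty hD, isStable_cycleColliders D, cycleProj_imset hD⟩
  · rintro ⟨S, hne, hS, rfl⟩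
    obtain ⟨D, hD, rfl⟩ := exists_cycleColliders_eq hS hne
    exact ⟨_, ⟨D, hD, rfl⟩, cycleProj_imset hD⟩

lemma cycleProj_injOn_CIM (n : ℕ) : Set.InjOn (cycleProj n) (CIM (cycleG (n + 4))) := by
  refine injOn_convexHull_of_eqOn_compl_range
    (fun t : Fin (n + 4) => ({t, t + 1, t + 2} : Finset _)) (cycleG (n + 4)).edgeIndicator ?_
    fun _ _ => rfl
  rintro _ ⟨D, hD, rfl⟩ S hS
  exact DAG.imset_eq_edgeIndicator hD (fun _ _ _ _ => cycleG_forall_adj_three)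
    (fun _ _ _ => cycleG_triple_mem_range) hS

end Cycle

/-- **`CIM` of paths and cycles vs. stable set polytopes.**  The coordinate projection
carries `CIM_{I_p}` (`p = n+2 ≥ 2`) affinely bijectively onto `STAB(I_{p-2})`, and carries
`CIM_{C_p}` (`p = n+4 ≥ 4`) affinely bijectively onto the convex hull of the incidence
vectors of the non-empty stable sets of `C_p`. -/
theorem cim_path_cycle_eq_stab (n : ℕ) :
    ((pathProj n) '' CIM (pathG (n + 2)) = STAB (pathG n) ∧
      Set.InjOn (pathProj n) (CIM (pathG (n + 2)))) ∧
    ((cycleProj n) '' CIM (cycleG (n + 4)) =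
        convexHull ℝ { f | ∃ S : Finset (Fin (n + 4)),
          S.Nonempty ∧ IsStable (cycleG (n + 4)) S ∧ f = indVec S } ∧
      Set.InjOn (cycleProj n) (CIM (cycleG (n + 4)))) := by
  refine ⟨⟨?_, pathProj_injOn_CIM n⟩, ?_, cycleProj_injOn_CIM n⟩
  · rw [CIM, LinearMap.image_convexHull, pathProj_image_imsets, STAB]
  · rw [CIM, LinearMap.image_convexHull, cycleProj_image_imsets]
end
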